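/- arXiv:0806.1528 — 7 statements merged into one kernel-verified Lean document; each statement's English description precedes it below -/
import Mathlib

section
/- (Christoffel–Darboux formula for OPUC) For orthonormal polynomials φ_j of a nontrivial probability measure on the unit circle, for all z, ζ with conj(z)ζ ≠ 1: Σ_{j=0}^n conj(φ_j(z)) φ_j(ζ) = (conj(φ_{n+1}*(z)) φ_{n+1}*(ζ) − conj(φ_{n+1}(z)) φ_{n+1}(ζ)) / (1 − conj(z)ζ), where φ_n*(z) = z^n conj(φ_n(1/conj(z))). -/
/-!
Szegő recursion: `X φ_m - ρ φ_{m+1}` (with `ρ` the ratio of leading coefficients) has degree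
`≤ m` and is orthogonal to `X, …, X^m`; reflecting, this characterizes it as a multiple
`α φ_m^*`, and comparing norms gives `|ρ|² + |α|² = 1`. The transfer matrix of the recursion
preserves the form `conj v*(z) v*(ζ) - conj v(z) v(ζ)`, which yields
`conj φ_{m+1}^*(z) φ_{m+1}^*(ζ) - conj φ_{m+1}(z) φ_{m+1}(ζ)
  = conj φ_m^*(z) φ_m^*(ζ) - conj z ζ conj φ_m(z) φ_m(ζ)`, and the formula telescopes.
-/

open MeasureTheory Polynomial Finset Metric
open scoped ComplexConjugate

namespace Polynomial

lemma exists_eq_sum_smul_of_natDegree_le {K : Type*} [Field K] {φ : ℕ → K[X]}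
    (hdeg : ∀ j, (φ j).natDegree = j) (hne : ∀ j, φ j ≠ 0) {m : ℕ} {p : K[X]}
    (hp : p.natDegree ≤ m) : ∃ c : ℕ → K, ∑ j ∈ range (m + 1), c j • φ j = p := by
  let S : Sequence K := ⟨φ, fun j => by rw [degree_eq_natDegree (hne j), hdeg]⟩
  have hspan := S.span_degreeLE (m := m) fun i _ => (leadingCoeff_ne_zero.2 (hne i)).isUnit
  have hIic : Set.Iic m = ↑(range (m + 1)) := by ext; simp
  rw [← Submodule.mem_span_image_finset_iff_exists_fun', ← hIic]
  exact hspan ▸ mem_degreeLE.2 (degree_le_of_natDegree_le hp)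

lemma natDegree_X_mul_sub_smul_le {K : Type*} [Field K] {p q : K[X]} {m : ℕ}
    (hp : p.natDegree = m) (hq : q.natDegree = m + 1) :
    (X * p - (p.leadingCoeff / q.leadingCoeff) • q).natDegree ≤ m := by
  have hq0 : q.leadingCoeff ≠ 0 :=
    leadingCoeff_ne_zero.2 (ne_zero_of_natDegree_gt (n := m) (by omega))
  refine natDegree_le_iff_coeff_eq_zero.2 fun i hi => ?_
  obtain ⟨i, rfl⟩ := Nat.exists_eq_add_of_lt hi
  rw [coeff_sub, coeff_smul, smul_eq_mul, coeff_X_mul]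
  rcases Nat.eq_zero_or_pos i with rfl | hi
  · rw [add_zero, ← hp, coeff_natDegree, hp, ← hq, coeff_natDegree, div_mul_cancel₀ _ hq0,
      sub_self]
  · rw [coeff_eq_zero_of_natDegree_lt (by omega), coeff_eq_zero_of_natDegree_lt (by omega),
      mul_zero, sub_zero]

/-- The reversed polynomial `p^*(z) = z^N conj (p (1 / conj z))` for `natDegree p ≤ N`. -/
noncomputable def conjReflect (N : ℕ) (p : ℂ[X]) : ℂ[X] := (p.map (starRingEnd ℂ)).reflect N

variable {N : ℕ} {p : ℂ[X]}

lemma coeff_conjReflect (N : ℕ) (p : ℂ[X]) (i : ℕ) :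
    (conjReflect N p).coeff i = conj (p.coeff (revAt N i)) := by
  rw [conjReflect, coeff_reflect, coeff_map]

@[simp]
lemma conjReflect_conjReflect (N : ℕ) (p : ℂ[X]) : conjReflect N (conjReflect N p) = p := by
  ext i
  rw [coeff_conjReflect, coeff_conjReflect, revAt_invol, Complex.conj_conj]

lemma conjReflect_add (N : ℕ) (p q : ℂ[X]) :
    conjReflect N (p + q) = conjReflect N p + conjReflect N q := by
  rw [conjReflect, Polynomial.map_add, reflect_add]; rfl

lemma conjReflect_smul (N : ℕ) (c : ℂ) (p : ℂ[X]) :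
    conjReflect N (c • p) = conj c • conjReflect N p := by
  rw [conjReflect, smul_eq_C_mul, Polynomial.map_mul, map_C, reflect_C_mul, smul_eq_C_mul]; rfl

lemma natDegree_conjReflect_le (hp : p.natDegree ≤ N) : (conjReflect N p).natDegree ≤ N :=
  natDegree_reflect_le.trans (by rw [natDegree_map]; omega)

lemma conjReflect_X_mul (hp : p.natDegree ≤ N) : conjReflect (N + 1) (X * p) = conjReflect N p := by
  rw [conjReflect, Polynomial.map_mul, map_X, add_comm,
    reflect_mul _ _ natDegree_X_le (by rwa [natDegree_map]), ← pow_one X, reflect_monomial,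
    revAt_le le_rfl, Nat.sub_self, pow_zero, one_mul]; rfl

lemma conjReflect_succ (hp : p.natDegree ≤ N) : conjReflect (N + 1) p = X * conjReflect N p := by
  conv_lhs => rw [← conjReflect_conjReflect N p,
    ← conjReflect_X_mul (natDegree_conjReflect_le hp), conjReflect_conjReflect]

lemma eval_conjReflect (hp : p.natDegree ≤ N) (z : ℂ) :
    (conjReflect N p).eval z = ∑ k ∈ range (N + 1), conj (p.coeff k) * z ^ (N - k) := by
  rw [eval_eq_sum_range' (Nat.lt_succ_of_le (natDegree_conjReflect_le hp)),
    ← sum_range_reflect]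
  refine sum_congr rfl fun k hk => ?_
  have hk : k ≤ N := Nat.lt_succ_iff.mp (mem_range.mp hk)
  rw [coeff_conjReflect, Nat.succ_sub_one, revAt_le (Nat.sub_le N k), Nat.sub_sub_self hk]

lemma eval_conjReflect_of_norm_eq_one (hp : p.natDegree ≤ N) {z : ℂ} (hz : ‖z‖ = 1) :
    (conjReflect N p).eval z = z ^ N * conj (p.eval z) := by
  have hz' : conj z * z = 1 := by rw [Complex.conj_mul', hz]; norm_num
  let _ : Invertible (conj z) := ⟨z, by rwa [mul_comm], hz'⟩
  have h := eval₂_reflect_mul_pow (RingHom.id ℂ) (conj z) N (p.map (starRingEnd ℂ))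
    (by rwa [natDegree_map])
  rw [eval₂_id, eval₂_id, eval_map, eval₂_at_apply] at h
  change (conjReflect N p).eval z * conj z ^ N = conj (p.eval z) at h
  rw [← h, mul_left_comm, ← mul_pow, mul_comm z, hz', one_pow, mul_one]

end Polynomial

section CircleInner

variable (μ : Measure ℂ) [IsFiniteMeasureOnCompacts μ]

lemma integrableOn_sphere_conj_eval_mul_eval (p q : ℂ[X]) :
    IntegrableOn (fun z => conj (p.eval z) * q.eval z) (sphere 0 1) μ :=
  (by fun_prop : Continuous fun z => conj (p.eval z) * q.eval z).continuousOn.integrableOn_compact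
    (isCompact_sphere 0 1)

/-- Integrating over the unit circle makes this sesquilinear for every locally finite `μ`;
for `μ` carried by the circle it is the `L²(μ)` inner product (`circleInner_eq_integral`). -/
noncomputable def circleInner : ℂ[X] →ₗ⋆[ℂ] ℂ[X] →ₗ[ℂ] ℂ :=
  LinearMap.mk₂'ₛₗ (starRingEnd ℂ) (RingHom.id ℂ)
    (fun p q => ∫ z in sphere 0 1, conj (p.eval z) * q.eval z ∂μ)
    (fun p p' q => by
      simp only [eval_add, map_add, add_mul]
      exact integral_add (integrableOn_sphere_conj_eval_mul_eval μ p q)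
        (integrableOn_sphere_conj_eval_mul_eval μ p' q))
    (fun c p q => by
      simp only [eval_smul, smul_eq_mul, map_mul, mul_assoc]
      exact integral_const_mul _ _)
    (fun p q q' => by
      simp only [eval_add, mul_add]
      exact integral_add (integrableOn_sphere_conj_eval_mul_eval μ p q)
        (integrableOn_sphere_conj_eval_mul_eval μ p q'))
    (fun c p q => by
      simp only [eval_smul, smul_eq_mul, mul_left_comm _ c]
      exact integral_const_mul _ _)

variable {μ}

lemma circleInner_apply (p q : ℂ[X]) :
    circleInner μ p q = ∫ z in sphere 0 1, conj (p.eval z) * q.eval z ∂μ := rfl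

lemma circleInner_eq_integral (hμ : ∀ᵐ z ∂μ, ‖z‖ = 1) (p q : ℂ[X]) :
    circleInner μ p q = ∫ z, conj (p.eval z) * q.eval z ∂μ := by
  rw [circleInner_apply, Measure.restrict_eq_self_of_ae_mem (by simpa using hμ)]

lemma conj_circleInner (p q : ℂ[X]) : conj (circleInner μ p q) = circleInner μ q p := by
  simp only [circleInner_apply, ← integral_conj, map_mul, Complex.conj_conj, mul_comm]

lemma circleInner_congr_of_sphere {p q p' q' : ℂ[X]}
    (h : ∀ z : ℂ, ‖z‖ = 1 → conj (p.eval z) * q.eval z = conj (p'.eval z) * q'.eval z) :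
    circleInner μ p q = circleInner μ p' q' :=
  setIntegral_congr_fun isClosed_sphere.measurableSet fun z hz =>
    h z (mem_sphere_zero_iff_norm.mp hz)

lemma circleInner_X_mul (p q : ℂ[X]) : circleInner μ (X * p) (X * q) = circleInner μ p q :=
  circleInner_congr_of_sphere fun z hz => by
    have hz' : conj z * z = 1 := by rw [Complex.conj_mul', hz]; norm_num
    simp only [eval_mul, eval_X, map_mul]
    linear_combination conj (p.eval z) * q.eval z * hz'

lemma circleInner_conjReflect {N : ℕ} {p q : ℂ[X]} (hp : p.natDegree ≤ N) (hq : q.natDegree ≤ N) :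
    circleInner μ (conjReflect N p) (conjReflect N q) = circleInner μ q p :=
  circleInner_congr_of_sphere fun z hz => by
    have hz' : conj z ^ N * z ^ N = 1 := by
      rw [← mul_pow, Complex.conj_mul', hz]; norm_num
    simp only [eval_conjReflect_of_norm_eq_one hp hz, eval_conjReflect_of_norm_eq_one hq hz,
      map_mul, map_pow, Complex.conj_conj]
    linear_combination p.eval z * conj (q.eval z) * hz'

lemma circleInner_conjReflect_succ {N : ℕ} {p q : ℂ[X]} (hp : p.natDegree ≤ N)
    (hq : q.natDegree ≤ N + 1) :
    circleInner μ p (conjReflect (N + 1) q) = circleInner μ q (X * conjReflect N p) := by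
  conv_lhs => rw [← conjReflect_conjReflect (N + 1) p]
  rw [circleInner_conjReflect (natDegree_conjReflect_le (hp.trans N.le_succ)) hq,
    conjReflect_succ hp]

end CircleInner

lemma conj_mul_sub_conj_mul_eq_of_transfer {a b x y x₁ y₁ x' y' x₁' y₁' : ℂ} (hb : b ≠ 0)
    (hab : conj b * b + conj a * a = 1)
    (hx : x = b * x₁ + a * y) (hy : y = conj b * y₁ + conj a * x)
    (hx' : x' = b * x₁' + a * y') (hy' : y' = conj b * y₁' + conj a * x') :
    conj y₁ * y₁' - conj x₁ * x₁' = conj y * y' - conj x * x' := by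
  have hcx := congrArg conj hx
  have hcy := congrArg conj hy
  simp only [map_add, map_mul, Complex.conj_conj] at hcx hcy
  -- Multiplied by `conj b * b`, and with `x₁, y₁, x₁', y₁'` eliminated, the left side becomes
  -- `(1 - conj a * a) * (conj y * y' - conj x * x')`.
  refine mul_left_cancel₀ (mul_ne_zero ((map_ne_zero (starRingEnd ℂ)).2 hb) hb) ?_
  linear_combination (-(conj b * y₁')) * hcy - (conj y - a * conj x) * hy' + b * x₁' * hcx
    + (conj x - conj a * conj y) * hx' - (conj y * y' - conj x * x') * hab

section Orthonormal

variable {μ : Measure ℂ} [IsFiniteMeasureOnCompacts μ] {φ : ℕ → ℂ[X]}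
  (hdeg : ∀ j, (φ j).natDegree = j)
  (hortho : ∀ j k, circleInner μ (φ j) (φ k) = if j = k then 1 else 0)

include hortho

lemma ne_zero_of_circleInner_orthonormal (j : ℕ) : φ j ≠ 0 := fun h => by
  simpa [h] using hortho j j

include hdeg

lemma circleInner_eq_zero_of_natDegree_lt {n : ℕ} {p : ℂ[X]} (hp : p.natDegree < n) :
    circleInner μ (φ n) p = 0 := by
  obtain ⟨n, rfl⟩ := Nat.exists_eq_succ_of_ne_zero (by omega : n ≠ 0)
  obtain ⟨c, rfl⟩ := exists_eq_sum_smul_of_natDegree_le hdeg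
    (ne_zero_of_circleInner_orthonormal hortho) (Nat.lt_succ_iff.mp hp)
  refine (map_sum _ _ _).trans (sum_eq_zero fun j hj => ?_)
  have : n + 1 ≠ j := by simp only [mem_range] at hj; omega
  rw [map_smul, hortho, if_neg this, smul_zero]

lemma exists_eq_smul_of_forall_circleInner_eq_zero {m : ℕ} {t : ℂ[X]} (ht : t.natDegree ≤ m)
    (horth : ∀ p : ℂ[X], p.natDegree < m → circleInner μ p t = 0) : ∃ c : ℂ, t = c • φ m := by
  obtain ⟨c, rfl⟩ := exists_eq_sum_smul_of_natDegree_le hdeg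
    (ne_zero_of_circleInner_orthonormal hortho) ht
  have hc : ∀ j < m, c j = 0 := fun j hj => by
    have := horth (φ j) (by rwa [hdeg])
    simpa [map_sum, hortho, show j < m + 1 by omega] using this
  refine ⟨c m, ?_⟩
  rw [sum_range_succ, sum_eq_zero fun j hj => by rw [hc j (mem_range.1 hj), zero_smul], zero_add]

lemma circleInner_conjReflect_X_mul_sub_smul_eq_zero {m : ℕ} {b : ℂ}
    (hs : (X * φ m - b • φ (m + 1)).natDegree ≤ m) {p : ℂ[X]} (hp : p.natDegree < m) :
    circleInner μ p (conjReflect m (X * φ m - b • φ (m + 1))) = 0 := by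
  obtain ⟨N, rfl⟩ : ∃ N, m = N + 1 := ⟨m - 1, by omega⟩
  have hpN : p.natDegree ≤ N := Nat.lt_succ_iff.mp hp
  have hr : (conjReflect N p).natDegree < N + 1 := Nat.lt_succ_of_le (natDegree_conjReflect_le hpN)
  have hXr : (X * conjReflect N p).natDegree < N + 1 + 1 :=
    (natDegree_mul_le_of_le natDegree_X_le (natDegree_conjReflect_le hpN)).trans_lt (by omega)
  rw [circleInner_conjReflect_succ hpN hs]
  simp only [map_sub, map_smulₛₗ, LinearMap.sub_apply, LinearMap.smul_apply, circleInner_X_mul,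
    circleInner_eq_zero_of_natDegree_lt hdeg hortho hr,
    circleInner_eq_zero_of_natDegree_lt hdeg hortho hXr, smul_zero, sub_zero]

lemma conj_mul_add_conj_mul_eq_one_of_X_mul_eq {m : ℕ} {a b : ℂ}
    (hrec : X * φ m = b • φ (m + 1) + a • conjReflect m (φ m)) :
    conj b * b + conj a * a = 1 := by
  have hcross : circleInner μ (φ (m + 1)) (conjReflect m (φ m)) = 0 :=
    circleInner_eq_zero_of_natDegree_lt hdeg hortho
      (Nat.lt_succ_of_le (natDegree_conjReflect_le (hdeg m).le))
  have hcross' : circleInner μ (conjReflect m (φ m)) (φ (m + 1)) = 0 := by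
    rw [← conj_circleInner, hcross, map_zero]
  have hnorm := circleInner_X_mul (μ := μ) (φ m) (φ m)
  rw [hortho, if_pos rfl, hrec] at hnorm
  simp only [map_add, map_smulₛₗ, LinearMap.add_apply, LinearMap.smul_apply, smul_eq_mul, hortho,
    if_pos, hcross, hcross', circleInner_conjReflect (hdeg m).le (hdeg m).le,
    RingHom.id_apply] at hnorm
  linear_combination hnorm

lemma exists_szego_recursion (m : ℕ) :
    ∃ a b : ℂ, b ≠ 0 ∧ conj b * b + conj a * a = 1 ∧
      X * φ m = b • φ (m + 1) + a • conjReflect m (φ m) := by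
  have hlead (j : ℕ) : (φ j).leadingCoeff ≠ 0 :=
    leadingCoeff_ne_zero.2 (ne_zero_of_circleInner_orthonormal hortho j)
  set b := (φ m).leadingCoeff / (φ (m + 1)).leadingCoeff
  have hs := natDegree_X_mul_sub_smul_le (hdeg m) (hdeg (m + 1))
  obtain ⟨c, hc⟩ := exists_eq_smul_of_forall_circleInner_eq_zero hdeg hortho
    (natDegree_conjReflect_le hs) fun _ =>
      circleInner_conjReflect_X_mul_sub_smul_eq_zero hdeg hortho hs
  have hrec : X * φ m = b • φ (m + 1) + conj c • conjReflect m (φ m) := by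
    rw [← conjReflect_smul, ← hc, conjReflect_conjReflect, add_sub_cancel]
  exact ⟨conj c, b, div_ne_zero (hlead m) (hlead (m + 1)),
    conj_mul_add_conj_mul_eq_one_of_X_mul_eq hdeg hortho hrec, hrec⟩

lemma conj_eval_mul_eval_conjReflect_succ_sub (m : ℕ) (z ζ : ℂ) :
    conj ((conjReflect (m + 1) (φ (m + 1))).eval z) * (conjReflect (m + 1) (φ (m + 1))).eval ζ
        - conj ((φ (m + 1)).eval z) * (φ (m + 1)).eval ζ
      = conj ((conjReflect m (φ m)).eval z) * (conjReflect m (φ m)).eval ζ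
        - conj z * ζ * (conj ((φ m).eval z) * (φ m).eval ζ) := by
  obtain ⟨a, b, hb, hab, hrec⟩ := exists_szego_recursion hdeg hortho m
  have hrec' :
      conjReflect m (φ m) = conj b • conjReflect (m + 1) (φ (m + 1)) + conj a • (X * φ m) := by
    have hinv : conjReflect (m + 1) (conjReflect m (φ m)) = X * φ m := by
      rw [← conjReflect_X_mul (hdeg m).le, conjReflect_conjReflect]
    have h := congrArg (conjReflect (m + 1)) hrec
    rwa [conjReflect_add, conjReflect_smul, conjReflect_smul, hinv,
      conjReflect_X_mul (hdeg m).le] at h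
  have hx (w : ℂ) := congrArg (eval w) hrec
  have hy (w : ℂ) := congrArg (eval w) hrec'
  simp only [eval_add, eval_smul, smul_eq_mul] at hx hy
  rw [conj_mul_sub_conj_mul_eq_of_transfer hb hab (hx z) (hy z) (hx ζ) (hy ζ), eval_mul, eval_mul,
    eval_X, eval_X, map_mul]
  ring

lemma one_sub_mul_sum_conj_eval_mul_eval (n : ℕ) (z ζ : ℂ) :
    (1 - conj z * ζ) * ∑ j ∈ range n, conj ((φ j).eval z) * (φ j).eval ζ
      = conj ((conjReflect n (φ n)).eval z) * (conjReflect n (φ n)).eval ζ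
        - conj ((φ n).eval z) * (φ n).eval ζ := by
  induction n with
  | zero =>
    have hφ₀ := eq_C_of_natDegree_eq_zero (hdeg 0)
    rw [eval_conjReflect (hdeg 0).le, eval_conjReflect (hdeg 0).le, hφ₀]
    simp only [sum_range_zero, mul_zero, zero_add, sum_range_one, Nat.sub_self, pow_zero, mul_one,
      coeff_C_zero, eval_C, Complex.conj_conj]
    ring
  | succ n ih =>
    rw [sum_range_succ, mul_add, ih, conj_eval_mul_eval_conjReflect_succ_sub hdeg hortho]
    ring

end Orthonormal

theorem cd_formula_opuc_general
    (μ : Measure ℂ) [IsProbabilityMeasure μ]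
    (hcirc : ∀ᵐ z ∂μ, ‖z‖ = 1)
    (φ : ℕ → Polynomial ℂ)
    (hdeg : ∀ j, (φ j).natDegree = j)
    (hortho : ∀ j k, ∫ z, (starRingEnd ℂ) ((φ j).eval z) * (φ k).eval z ∂μ
      = if j = k then 1 else 0)
    (φstar : ℕ → ℂ → ℂ)
    (hstar : ∀ m z, φstar m z
      = ∑ k ∈ Finset.range (m + 1), (starRingEnd ℂ) ((φ m).coeff k) * z ^ (m - k))
    (n : ℕ) :
    ∀ z ζ : ℂ, (starRingEnd ℂ) z * ζ ≠ 1 →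
      ∑ j ∈ Finset.range (n + 1),
          (starRingEnd ℂ) ((φ j).eval z) * (φ j).eval ζ
        = ((starRingEnd ℂ) (φstar (n + 1) z) * φstar (n + 1) ζ
            - (starRingEnd ℂ) ((φ (n + 1)).eval z) * (φ (n + 1)).eval ζ)
          / (1 - (starRingEnd ℂ) z * ζ) := by
  intro z ζ hzζ
  have horthonormal (j k : ℕ) : circleInner μ (φ j) (φ k) = if j = k then 1 else 0 :=
    (circleInner_eq_integral hcirc _ _).trans (hortho j k)
  have hφstar (w : ℂ) : φstar (n + 1) w = (conjReflect (n + 1) (φ (n + 1))).eval w := by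
    rw [hstar, eval_conjReflect (hdeg _).le]
  rw [hφstar, hφstar, eq_div_iff (sub_ne_zero.2 hzζ.symm), mul_comm,
    one_sub_mul_sum_conj_eval_mul_eval hdeg horthonormal]

/-- Christoffel–Darboux formula for orthonormal polynomials on the unit circle.
Here `φstar m` is the reversed polynomial `φ_m*(z) = z^m conj(φ_m(1/conj z))`,
given by its coefficient formula. -/
theorem cd_formula_opuc
    (μ : Measure ℂ) [IsProbabilityMeasure μ]
    (hcirc : ∀ᵐ z ∂μ, ‖z‖ = 1)
    (φ : ℕ → Polynomial ℂ)
    (hdeg : ∀ j, (φ j).natDegree = j)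
    (hlead : ∀ j, ((φ j).leadingCoeff.im = 0 ∧ 0 < (φ j).leadingCoeff.re))
    (hortho : ∀ j k, ∫ z, (starRingEnd ℂ) ((φ j).eval z) * (φ k).eval z ∂μ
      = if j = k then 1 else 0)
    (φstar : ℕ → ℂ → ℂ)
    (hstar : ∀ m z, φstar m z
      = ∑ k ∈ Finset.range (m + 1), (starRingEnd ℂ) ((φ m).coeff k) * z ^ (m - k))
    (n : ℕ) :
    ∀ z ζ : ℂ, (starRingEnd ℂ) z * ζ ≠ 1 →
      ∑ j ∈ Finset.range (n + 1),
          (starRingEnd ℂ) ((φ j).eval z) * (φ j).eval ζ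
        = ((starRingEnd ℂ) (φstar (n + 1) z) * φstar (n + 1) ζ
            - (starRingEnd ℂ) ((φ (n + 1)).eval z) * (φ (n + 1)).eval ζ)
          / (1 - (starRingEnd ℂ) z * ζ) :=
  cd_formula_opuc_general μ hcirc φ hdeg hortho φstar hstar n
end

section
/- All zeros of the orthogonal polynomial p_n are real and simple, and the zeros of p_{n+1} strictly interlace those of p_n: between any two consecutive zeros of p_{n+1} lies exactly one zero of p_n, and p_{n+1} has one zero above the top zero of p_n and one below the bottom zero of p_n. -/
/-!
Induction on `n`, driven by the three-term recurrence. If the simple zeros `s₀ < ⋯ < sₙ` of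
`p_{n+1}` interlace those of `p_n`, then `p_n` has sign `(-1)^(n+i)` at `sᵢ`. Evaluating the
recurrence at a zero of `p_{n+1}` gives `a_{n+2} p_{n+2}(sᵢ) = -a_{n+1} p_n(sᵢ)`, so `p_{n+2}`
alternates in sign along the `sᵢ`, starting negative at the top one. Since `p_{n+2}` has positive
leading coefficient and degree `n+2`, its signs at `±∞` add one sign change beyond each end, and
the intermediate value theorem yields `n+2` zeros, one in each of the resulting gaps; these are
then all the zeros of `p_{n+2}`.
-/

open MeasureTheory Polynomial Finset

theorem Polynomial.eq_C_leadingCoeff_mul_prod_X_sub_C_of_isRoot {R : Type*} [CommRing R]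
    [IsDomain R] {q : R[X]} {m : ℕ} {t : Fin m → R} (hdeg : q.natDegree ≤ m)
    (ht : Function.Injective t) (hroot : ∀ i, q.IsRoot (t i)) :
    q = C q.leadingCoeff * ∏ i, (X - C (t i)) := by
  rcases eq_or_ne q 0 with rfl | hq
  · simp
  have hsub : univ.val.map t ≤ q.roots := by
    rw [Multiset.le_iff_subset (Multiset.Nodup.map ht univ.nodup)]
    intro x hx
    obtain ⟨i, -, rfl⟩ := Multiset.mem_map.1 hx
    exact (mem_roots hq).2 (hroot i)
  have hcard : q.natDegree ≤ Multiset.card (univ.val.map t) := by simpa using hdeg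
  have hroots : q.roots = univ.val.map t :=
    (Multiset.eq_of_le_of_card_le hsub ((card_roots' q).trans hcard)).symm
  calc q = C q.leadingCoeff * (q.roots.map fun a => X - C a).prod :=
        (C_leadingCoeff_mul_prod_multiset_X_sub_C
          (le_antisymm (card_roots' q) (hcard.trans (Multiset.card_le_card hsub)))).symm
    _ = C q.leadingCoeff * ∏ i, (X - C (t i)) := by rw [hroots, Multiset.map_map]; rfl

theorem exists_mem_Ioo_eq_zero_of_mul_neg {f : ℝ → ℝ} (hf : Continuous f) {a b : ℝ}
    (hab : a < b) (h : f a * f b < 0) : ∃ c ∈ Set.Ioo a b, f c = 0 := by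
  rcases mul_neg_iff.1 h with ⟨ha, hb⟩ | ⟨ha, hb⟩
  · exact intermediate_value_Ioo' hab.le hf.continuousOn ⟨hb, ha⟩
  · exact intermediate_value_Ioo hab.le hf.continuousOn ⟨ha, hb⟩

theorem exists_strictMono_zeros_of_sign_changes {f : ℝ → ℝ} (hf : Continuous f) {k : ℕ}
    {u : Fin (k + 1) → ℝ} (hu : StrictMono u)
    (h : ∀ i : Fin k, f (u i.castSucc) * f (u i.succ) < 0) :
    ∃ t : Fin k → ℝ, StrictMono t ∧ (∀ i, f (t i) = 0) ∧
      ∀ i, u i.castSucc < t i ∧ t i < u i.succ := by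
  choose t ht hzero using fun i => exists_mem_Ioo_eq_zero_of_mul_neg hf
    (hu (Fin.castSucc_lt_succ (i := i))) (h i)
  refine ⟨t, fun i j hij => ?_, hzero, ht⟩
  calc t i < u i.succ := (ht i).2
    _ ≤ u j.castSucc := hu.monotone (Fin.succ_le_castSucc_iff.2 hij)
    _ < t j := (ht j).1

theorem StrictMono.finSnoc {α : Type*} [Preorder α] {m : ℕ} {f : Fin m → α} (hf : StrictMono f)
    {a : α} (ha : ∀ j, f j < a) : StrictMono (Fin.snoc f a : Fin (m + 1) → α) := by
  intro i j hij
  induction j using Fin.lastCases with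
  | last =>
    induction i using Fin.lastCases with
    | last => exact absurd hij (lt_irrefl _)
    | cast i => simpa using ha i
  | cast j =>
    induction i using Fin.lastCases with
    | last => exact absurd hij (not_lt.2 (Fin.le_last _))
    | cast i => simpa using hf (Fin.castSucc_lt_castSucc_iff.1 hij)

theorem mul_neg_of_neg_one_pow_mul_pos {R : Type*} [CommRing R] [LinearOrder R]
    [IsStrictOrderedRing R] {k : ℕ} {x y : R} (hx : 0 < (-1) ^ k * x)
    (hy : 0 < (-1) ^ (k + 1) * y) : x * y < 0 := by
  have h := mul_pos hx hy
  have e : (-1) ^ k * x * ((-1) ^ (k + 1) * y) = -(x * y) := by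
    rw [pow_succ]; ring_nf; simp [pow_mul']
  linarith

theorem Polynomial.eventually_atTop_neg_one_pow_mul_eval_neg_pos {q : ℝ[X]} (hdeg : 0 < q.degree)
    (hlead : 0 < q.leadingCoeff) : ∀ᶠ x in Filter.atTop, 0 < (-1) ^ q.natDegree * q.eval (-x) := by
  set Q := C ((-1) ^ q.natDegree) * q.comp (-X)
  have hQdeg : 0 < Q.degree := by simpa [Q, degree_C_mul] using hdeg
  have hQlead : Q.leadingCoeff = q.leadingCoeff := by
    simp [Q, ← mul_assoc, ← mul_pow]
  filter_upwards [(Q.tendsto_atTop_of_leadingCoeff_nonneg hQdeg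
    (hQlead ▸ hlead.le)).eventually_gt_atTop 0] with x hx
  simpa [Q, eval_comp] using hx

section Interlacing

variable {α : Type*} [LinearOrder α] {n : ℕ} {r : Fin n → α} {s : Fin (n + 1) → α}

theorem lt_of_le_castSucc_of_interlace (hs : Monotone s)
    (hrs : ∀ i, s i.castSucc < r i ∧ r i < s i.succ) {i : Fin (n + 1)} {j : Fin n}
    (h : i ≤ j.castSucc) : s i < r j :=
  (hs h).trans_lt (hrs j).1

theorem lt_of_castSucc_lt_of_interlace (hs : Monotone s)
    (hrs : ∀ i, s i.castSucc < r i ∧ r i < s i.succ) {i : Fin (n + 1)} {j : Fin n}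
    (h : j.castSucc < i) : r j < s i :=
  (hrs j).2.trans_le (hs (Fin.castSucc_lt_iff_succ_le.1 h))

theorem card_filter_lt_of_interlace (hs : Monotone s)
    (hrs : ∀ i, s i.castSucc < r i ∧ r i < s i.succ) (i : Fin (n + 1)) :
    #{j | s i < r j} = n - i := by
  have hfilter :
      univ.filter (fun j => s i < r j) = univ.filter fun j : Fin n => ¬ (j : ℕ) < i := by
    ext j
    simp only [mem_filter, mem_univ, true_and, not_lt]
    refine ⟨fun h => ?_, fun h => lt_of_le_castSucc_of_interlace hs hrs (Fin.le_def.2 h)⟩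
    by_contra hji
    exact lt_asymm h (lt_of_castSucc_lt_of_interlace hs hrs (Fin.lt_def.2 (not_le.1 hji)))
  rw [hfilter, filter_not, card_sdiff_of_subset (filter_subset _ _), Fin.card_filter_val_lt,
    card_univ, Fintype.card_fin, min_eq_right (Nat.lt_succ_iff.1 i.isLt)]

end Interlacing

theorem neg_one_pow_card_mul_prod_sub_pos {R : Type*} [CommRing R] [LinearOrder R]
    [IsStrictOrderedRing R] {ι : Type*} (s : Finset ι) (r : ι → R) {x : R}
    (hx : ∀ j ∈ s, r j ≠ x) : 0 < (-1) ^ #{j ∈ s | x < r j} * ∏ j ∈ s, (x - r j) := by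
  rw [← prod_const, prod_filter, ← prod_mul_distrib]
  refine prod_pos fun j hj => ?_
  split_ifs with h
  · linarith
  · exact mul_pos one_pos (sub_pos.2 (lt_of_le_of_ne (not_lt.1 h) (hx j hj)))

theorem neg_one_pow_mul_eval_pos_of_interlace {n : ℕ} {r : Fin n → ℝ} {s : Fin (n + 1) → ℝ}
    (hs : Monotone s) (hrs : ∀ i, s i.castSucc < r i ∧ r i < s i.succ) {L : ℝ} (hL : 0 < L)
    (i : Fin (n + 1)) :
    0 < (-1) ^ (n + (i : ℕ)) * (C L * ∏ j, (X - C (r j))).eval (s i) := by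
  have hne : ∀ j ∈ (univ : Finset (Fin n)), r j ≠ s i := fun j _ => by
    rcases le_or_gt i j.castSucc with h | h
    · exact (lt_of_le_castSucc_of_interlace hs hrs h).ne'
    · exact (lt_of_castSucc_lt_of_interlace hs hrs h).ne
  have hparity : (-1 : ℝ) ^ (n + (i : ℕ)) = (-1) ^ #{j | s i < r j} := by
    rw [card_filter_lt_of_interlace hs hrs, show n + (i : ℕ) = n - i + 2 * i by omega,
      pow_add, pow_mul, neg_one_sq, one_pow, mul_one]
  simp only [eval_mul, eval_C, eval_prod, eval_sub, eval_X]
  rw [hparity, mul_left_comm]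
  exact mul_pos hL (neg_one_pow_card_mul_prod_sub_pos univ r hne)

theorem neg_mul_eval_pos_of_isRoot_of_recurrence {P Q R : ℝ[X]} {α β γ x ε : ℝ}
    (hα : 0 < α) (hγ : 0 < γ) (hrec : X * Q = C α * P + C β * Q + C γ * R)
    (hQ : Q.IsRoot x) (hR : 0 < ε * R.eval x) : 0 < -ε * P.eval x := by
  have h := congrArg (eval x) hrec
  simp only [eval_mul, eval_add, eval_C, eval_X, hQ.eq_zero, mul_zero] at h
  have : α * (-ε * P.eval x) = γ * (ε * R.eval x) := by linear_combination ε * h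
  exact pos_of_mul_pos_right (this ▸ mul_pos hγ hR) hα.le

theorem Polynomial.exists_roots_interlacing_of_neg_one_pow_mul_eval_pos {q : ℝ[X]} {m : ℕ}
    (hdeg : q.natDegree = m + 1) (hlead : 0 < q.leadingCoeff) {s : Fin m → ℝ}
    (hs : StrictMono s) (hsign : ∀ i : Fin m, 0 < (-1) ^ (m + (i : ℕ)) * q.eval (s i)) :
    ∃ t : Fin (m + 1) → ℝ, StrictMono t ∧ (∀ i, q.IsRoot (t i)) ∧
      ∀ i, t i.castSucc < s i ∧ s i < t i.succ := by
  have hdeg' : 0 < q.degree := natDegree_pos_iff_degree_pos.1 (by omega)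
  obtain ⟨R, hR, hRpos, hRneg, hRs⟩ := ((Filter.eventually_gt_atTop 0).and
    (((q.tendsto_atTop_of_leadingCoeff_nonneg hdeg' hlead.le).eventually_gt_atTop 0).and
    ((eventually_atTop_neg_one_pow_mul_eval_neg_pos hdeg' hlead).and
    (Filter.eventually_all.2 fun i => Filter.eventually_gt_atTop |s i|)))).exists
  rw [hdeg] at hRneg
  -- the points `-R < s₀ < ⋯ < s_{m-1} < R`, along which `q` alternates in sign
  set u : Fin (m + 2) → ℝ := Fin.cons (-R) (Fin.snoc s R)
  have hu : StrictMono u := by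
    refine Fin.strictMono_cons.2 ⟨fun j => ?_, hs.finSnoc fun j => (abs_lt.1 (hRs j)).2⟩
    induction j using Fin.lastCases with
    | last => simpa using neg_lt_self hR
    | cast i => simpa using (abs_lt.1 (hRs i)).1
  have hsign_u : ∀ k : Fin (m + 2), 0 < (-1) ^ (m + 1 + (k : ℕ)) * q.eval (u k) := by
    intro k
    induction k using Fin.cases with
    | zero => simpa [u] using hRneg
    | succ k =>
      induction k using Fin.lastCases with
      | last => simpa [u, ← two_mul, pow_mul] using hRpos
      | cast i =>
        simpa [u, show m + 1 + (i + 1) = m + i + 2 by omega, pow_add] using hsign i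
  obtain ⟨t, ht, hroot, hut⟩ := exists_strictMono_zeros_of_sign_changes q.continuous hu
    fun i => mul_neg_of_neg_one_pow_mul_pos (hsign_u _)
      (by simpa [add_assoc] using hsign_u i.succ)
  refine ⟨t, ht, hroot, fun i => ⟨?_, ?_⟩⟩
  · simpa [u] using (hut i.castSucc).2
  · simpa [u] using (hut i.succ).1

theorem oprl_zeros_real_simple_interlace_general
    (a b : ℕ → ℝ)
    (ha : ∀ m, 0 < a m)
    (p : ℕ → Polynomial ℝ)
    (hdeg : ∀ j, (p j).natDegree = j)
    (hlead : ∀ j, 0 < (p j).leadingCoeff)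
    (hrec : ∀ m, Polynomial.X * p (m + 1)
      = Polynomial.C (a (m + 2)) * p (m + 2) + Polynomial.C (b (m + 2)) * p (m + 1)
        + Polynomial.C (a (m + 1)) * p m)
    (n : ℕ) :
    ∃ (r : Fin n → ℝ) (s : Fin (n + 1) → ℝ),
      StrictMono r ∧ StrictMono s ∧
      p n = Polynomial.C ((p n).leadingCoeff)
        * ∏ i : Fin n, (Polynomial.X - Polynomial.C (r i)) ∧
      p (n + 1) = Polynomial.C ((p (n + 1)).leadingCoeff)
        * ∏ i : Fin (n + 1), (Polynomial.X - Polynomial.C (s i)) ∧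
      ∀ i : Fin n, s i.castSucc < r i ∧ r i < s i.succ := by
  induction n with
  | zero =>
    obtain ⟨s, hs, hroot, -⟩ := exists_roots_interlacing_of_neg_one_pow_mul_eval_pos (hdeg 1)
      (hlead 1) (s := Fin.elim0) (fun i => i.elim0) (fun i => i.elim0)
    exact ⟨Fin.elim0, s, fun i => i.elim0, hs,
      eq_C_leadingCoeff_mul_prod_X_sub_C_of_isRoot (hdeg 0).le (fun i => i.elim0)
        (fun i => i.elim0),
      eq_C_leadingCoeff_mul_prod_X_sub_C_of_isRoot (hdeg 1).le hs.injective hroot, fun i => i.elim0⟩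
  | succ n ih =>
    obtain ⟨r, s, -, hs, hpr, hps, hrs⟩ := ih
    have hsign : ∀ i : Fin (n + 1), 0 < (-1) ^ (n + 1 + (i : ℕ)) * (p (n + 2)).eval (s i) := by
      intro i
      have hpn : 0 < (-1) ^ (n + (i : ℕ)) * (p n).eval (s i) := by
        rw [hpr]
        exact neg_one_pow_mul_eval_pos_of_interlace hs.monotone hrs (hlead n) i
      have hroot : (p (n + 1)).IsRoot (s i) := by
        rw [hps, ← dvd_iff_isRoot]
        exact (dvd_prod_of_mem _ (mem_univ i)).mul_left _
      simpa [add_right_comm n 1, pow_succ] using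
        neg_mul_eval_pos_of_isRoot_of_recurrence (ha _) (ha _) (hrec n) hroot hpn
    obtain ⟨t, ht, hroot, hst⟩ :=
      exists_roots_interlacing_of_neg_one_pow_mul_eval_pos (hdeg _) (hlead _) hs hsign
    exact ⟨s, t, hs, ht, hps,
      eq_C_leadingCoeff_mul_prod_X_sub_C_of_isRoot (hdeg _).le ht.injective hroot, hst⟩

/-- The zeros of `p_n` are real and simple, and the zeros of `p_{n+1}` strictly
interlace those of `p_n`: between consecutive zeros of `p_{n+1}` there is exactly
one zero of `p_n`, and `p_{n+1}` has a zero above the top zero of `p_n` and one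
below the bottom zero. -/
theorem oprl_zeros_real_simple_interlace
    (μ : Measure ℝ)
    (hmom : ∀ k : ℕ, Integrable (fun t => |t| ^ k) μ)
    (a b : ℕ → ℝ)
    (ha : ∀ m, 0 < a m)
    (p : ℕ → Polynomial ℝ)
    (hdeg : ∀ j, (p j).natDegree = j)
    (hlead : ∀ j, 0 < (p j).leadingCoeff)
    (hortho : ∀ j k, ∫ t, (p j).eval t * (p k).eval t ∂μ = if j = k then 1 else 0)
    (hrec0 : Polynomial.X * p 0 = Polynomial.C (a 1) * p 1 + Polynomial.C (b 1) * p 0)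
    (hrec : ∀ m, Polynomial.X * p (m + 1)
      = Polynomial.C (a (m + 2)) * p (m + 2) + Polynomial.C (b (m + 2)) * p (m + 1)
        + Polynomial.C (a (m + 1)) * p m)
    (n : ℕ) :
    ∃ (r : Fin n → ℝ) (s : Fin (n + 1) → ℝ),
      StrictMono r ∧ StrictMono s ∧
      p n = Polynomial.C ((p n).leadingCoeff)
        * ∏ i : Fin n, (Polynomial.X - Polynomial.C (r i)) ∧
      p (n + 1) = Polynomial.C ((p (n + 1)).leadingCoeff)
        * ∏ i : Fin (n + 1), (Polynomial.X - Polynomial.C (s i)) ∧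
      ∀ i : Fin n, s i.castSucc < r i ∧ r i < s i.succ :=
  oprl_zeros_real_simple_interlace_general a b ha p hdeg hlead hrec n
end

section
/- Let μ be a nontrivial measure on ℂ with finite moments, π_{n−1} the orthogonal projection in L²(μ) onto polynomials of degree ≤ n−1, and K_{n;F} = π_{n−1} M_z π_{n−1} restricted to ran(π_{n−1}), where M_z is multiplication by z. Then det(z·1 − K_{n;F}) = X_n(z), the monic orthogonal polynomial of degree n. -/
open MeasureTheory Polynomial

/-!
In the orthonormal basis `x₀, …, x_{n-1}` of the polynomials of degree `< n`, the `k`-th column of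
`A` holds the coefficients of the projection of `z xₖ`. The remainder `z xₖ - ∑ⱼ A j k xⱼ` has
degree `≤ n` and is orthogonal to all polynomials of degree `< n`, hence is a multiple of `Xₙ`.
So `(X - Aᵀ) x ≡ 0 mod Xₙ` for the vector `x = (x₀, …, x_{n-1})` over `ℂ[X]`, and multiplying by
the adjugate gives `Xₙ ∣ det (X - Aᵀ) * x₀`. As `x₀` is a nonzero constant, `Xₙ` divides the
characteristic polynomial of `A`; both are monic of degree `n`.
-/

namespace Matrix

variable {ι R : Type*} [Fintype ι] [DecidableEq ι] [CommRing R]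

theorem charmatrix_mulVec (M : Matrix ι ι R) (v : ι → R[X]) :
    M.charmatrix *ᵥ v = (X : R[X]) • v - M.map C *ᵥ v := by
  rw [charmatrix, sub_mulVec, scalar_apply, ← smul_one_eq_diagonal, smul_mulVec, one_mulVec]
  rfl

theorem dvd_det_of_forall_dvd_mulVec (M : Matrix ι ι R) (v : ι → R) {p : R}
    (hdvd : ∀ k, p ∣ (M *ᵥ v) k) {i : ι} (hv : IsUnit (v i)) : p ∣ M.det := by
  have hadj : M.det • v = M.adjugate *ᵥ (M *ᵥ v) := by
    rw [mulVec_mulVec, adjugate_mul, smul_mulVec, one_mulVec]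
  have : p ∣ M.det * v i := by
    rw [← smul_eq_mul, ← Pi.smul_apply, hadj]
    exact Finset.dvd_sum fun k _ => dvd_mul_of_dvd_right (hdvd k) _
  exact hv.dvd_mul_right.mp this

end Matrix

theorem Polynomial.span_image_Iio_eq_degreeLT {K : Type*} [Field K] {x : ℕ → K[X]}
    (hdeg : ∀ j, (x j).degree = j) (n : ℕ) :
    Submodule.span K (x '' Set.Iio n) = degreeLT K n :=
  Sequence.span_degreeLT ⟨x, hdeg⟩ fun j _ =>
    isUnit_iff_ne_zero.mpr (leadingCoeff_ne_zero.mpr (degree_ne_bot.mp (by simp [hdeg j])))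

section OrthogonalPolynomials

variable {μ : Measure ℂ}

def HasFiniteMoments (μ : Measure ℂ) : Prop :=
  ∀ k : ℕ, Integrable (fun z : ℂ => ‖z‖ ^ k) μ

theorem HasFiniteMoments.integrable_conj_pow_mul_pow (hmom : HasFiniteMoments μ) (a b : ℕ) :
    Integrable (fun z : ℂ => (starRingEnd ℂ) z ^ a * z ^ b) μ :=
  (hmom (a + b)).mono' (by fun_prop) (ae_of_all _ fun z => by simp [pow_add])

theorem HasFiniteMoments.integrable_conj_eval_mul_eval (hmom : HasFiniteMoments μ)
    (p q : ℂ[X]) : Integrable (fun z : ℂ => (starRingEnd ℂ) (p.eval z) * q.eval z) μ := by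
  induction p using Polynomial.induction_on' with
  | add p₁ p₂ h₁ h₂ =>
    simp only [eval_add, map_add, add_mul]
    exact h₁.add h₂
  | monomial a c =>
    induction q using Polynomial.induction_on' with
    | add q₁ q₂ h₁ h₂ =>
      simp only [eval_add, mul_add]
      exact h₁.add h₂
    | monomial b d =>
      convert (hmom.integrable_conj_pow_mul_pow a b).const_mul ((starRingEnd ℂ) c * d) using 2
      simp only [eval_monomial, map_mul, map_pow]
      ring

noncomputable def HasFiniteMoments.innerₗ (hmom : HasFiniteMoments μ) (p : ℂ[X]) :
    ℂ[X] →ₗ[ℂ] ℂ where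
  toFun q := ∫ z, (starRingEnd ℂ) (p.eval z) * q.eval z ∂μ
  map_add' q r := by
    simp only [eval_add, mul_add]
    exact integral_add (hmom.integrable_conj_eval_mul_eval p q)
      (hmom.integrable_conj_eval_mul_eval p r)
  map_smul' c q := by
    simp only [eval_smul, smul_eq_mul, RingHom.id_apply, ← integral_const_mul]
    congr 1 with z
    ring

theorem HasFiniteMoments.innerₗ_apply (hmom : HasFiniteMoments μ) (p q : ℂ[X]) :
    hmom.innerₗ p q = ∫ z, (starRingEnd ℂ) (p.eval z) * q.eval z ∂μ :=
  rfl

theorem HasFiniteMoments.innerₗ_eq_zero_of_natDegree_lt (hmom : HasFiniteMoments μ) {n : ℕ}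
    {q : ℂ[X]} (hq : ∀ j < n, ∫ z, (starRingEnd ℂ) z ^ j * q.eval z ∂μ = 0) {p : ℂ[X]}
    (hp : p.natDegree < n) : hmom.innerₗ p q = 0 := by
  have hexpand : ∀ z, (starRingEnd ℂ) (p.eval z) * q.eval z
      = ∑ a ∈ Finset.range n, (starRingEnd ℂ) (p.coeff a) * ((starRingEnd ℂ) z ^ a * q.eval z) := by
    intro z
    simp only [eval_eq_sum_range' hp, map_sum, map_mul, map_pow, Finset.sum_mul, mul_assoc]
  have hint (a : ℕ) : Integrable (fun z => (starRingEnd ℂ) z ^ a * q.eval z) μ := by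
    simpa using hmom.integrable_conj_eval_mul_eval (X ^ a) q
  rw [innerₗ_apply, funext hexpand, integral_finsetSum _ fun a _ => (hint a).const_mul _]
  refine Finset.sum_eq_zero fun a ha => ?_
  rw [integral_const_mul, hq a (Finset.mem_range.mp ha), mul_zero]

theorem HasFiniteMoments.ne_zero_of_orthonormal (hmom : HasFiniteMoments μ) {x : ℕ → ℂ[X]}
    (hortho : ∀ j k, hmom.innerₗ (x j) (x k) = if j = k then 1 else 0) (j : ℕ) :
    x j ≠ 0 := fun h => by
  simpa [h] using hortho j j

theorem HasFiniteMoments.eq_zero_of_degree_lt_of_orthonormal (hmom : HasFiniteMoments μ)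
    {x : ℕ → ℂ[X]} (hortho : ∀ j k, hmom.innerₗ (x j) (x k) = if j = k then 1 else 0)
    (hdeg : ∀ j, (x j).natDegree = j) {n : ℕ} {r : ℂ[X]}
    (hr : r.degree < n) (horth : ∀ j < n, hmom.innerₗ (x j) r = 0) :
    r = 0 := by
  have hxdeg (j : ℕ) : (x j).degree = j := by
    rw [degree_eq_natDegree (hmom.ne_zero_of_orthonormal hortho j), hdeg]
  have hspan : r ∈ Submodule.span ℂ (x '' Set.Iio n) := by
    rw [span_image_Iio_eq_degreeLT hxdeg]
    exact mem_degreeLT.mpr hr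
  obtain ⟨l, hl, rfl⟩ := Finsupp.mem_span_image_iff_linearCombination ℂ |>.mp hspan
  have hcoeff (j : ℕ) : hmom.innerₗ (x j) (Finsupp.linearCombination ℂ x l) = l j := by
    rw [Finsupp.apply_linearCombination, Finsupp.linearCombination_apply]
    simp [hortho, Finsupp.sum, eq_comm]
  suffices l = 0 by simp [this]
  ext j
  by_cases hj : j < n
  · rw [← hcoeff, horth j hj, Finsupp.coe_zero, Pi.zero_apply]
  · exact (Finsupp.mem_supported' ℂ l).mp hl j hj

theorem HasFiniteMoments.dvd_of_natDegree_le_of_orthonormal (hmom : HasFiniteMoments μ)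
    {x : ℕ → ℂ[X]} (hortho : ∀ j k, hmom.innerₗ (x j) (x k) = if j = k then 1 else 0)
    (hdeg : ∀ j, (x j).natDegree = j) {n : ℕ} {Xp : ℂ[X]}
    (hXmonic : Xp.Monic) (hXdeg : Xp.natDegree = n)
    (hXorth : ∀ j < n, hmom.innerₗ (x j) Xp = 0) {r : ℂ[X]} (hr : r.natDegree ≤ n)
    (horth : ∀ j < n, hmom.innerₗ (x j) r = 0) : Xp ∣ r := by
  rw [← modByMonic_eq_zero_iff_dvd hXmonic]
  obtain ⟨c, hc⟩ : ∃ c, r /ₘ Xp = C c :=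
    ⟨_, eq_C_of_natDegree_eq_zero (by rw [natDegree_divByMonic r hXmonic, hXdeg]; omega)⟩
  refine hmom.eq_zero_of_degree_lt_of_orthonormal hortho hdeg (n := n) ?_ fun j hj => ?_
  · simpa [degree_eq_natDegree hXmonic.ne_zero, hXdeg] using degree_modByMonic_lt r hXmonic
  · rw [modByMonic_eq_sub_mul_div r Xp, hc, mul_comm, ← smul_eq_C_mul, map_sub, map_smul,
      horth j hj, hXorth j hj, smul_zero, sub_zero]

theorem HasFiniteMoments.dvd_X_mul_sub_sum_innerₗ (hmom : HasFiniteMoments μ)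
    {x : ℕ → ℂ[X]} (hortho : ∀ j k, hmom.innerₗ (x j) (x k) = if j = k then 1 else 0)
    (hdeg : ∀ j, (x j).natDegree = j) {n : ℕ} {Xp : ℂ[X]}
    (hXmonic : Xp.Monic) (hXdeg : Xp.natDegree = n)
    (hXorth : ∀ j < n, hmom.innerₗ (x j) Xp = 0) {k : ℕ} (hk : k < n) :
    Xp ∣ X * x k - ∑ j : Fin n, C (hmom.innerₗ (x j) (X * x k)) * x (j : ℕ) := by
  refine hmom.dvd_of_natDegree_le_of_orthonormal hortho hdeg hXmonic hXdeg hXorth ?_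
    fun i hi => ?_
  · refine (natDegree_sub_le _ _).trans
      (max_le ?_ (natDegree_sum_le_of_forall_le _ _ fun j _ => ?_))
    · exact natDegree_mul_le.trans (by rw [natDegree_X, hdeg]; omega)
    · exact (natDegree_C_mul_le _ _).trans (by rw [hdeg]; omega)
  · simp_rw [map_sub, map_sum, ← smul_eq_C_mul, map_smul, hortho, smul_eq_mul,
      Fin.sum_univ_eq_sum_range (fun j => hmom.innerₗ (x j) (X * x k) * if i = j then 1 else 0),
      mul_ite, mul_one, mul_zero, Finset.sum_ite_eq, Finset.mem_range, if_pos hi, sub_self]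

end OrthogonalPolynomials

/-- The characteristic polynomial of the truncated multiplication operator
`K_{n;F} = π_{n−1} M_z π_{n−1}` (expressed as a matrix in the orthonormal
polynomial basis `x_0, …, x_{n−1}` of `ran π_{n−1}`) is the monic orthogonal
polynomial `X_n`. -/
theorem charpoly_truncated_Mz_eq_monic_OP
    (μ : Measure ℂ)
    (hmom : ∀ k : ℕ, Integrable (fun z => ‖z‖ ^ k) μ)
    (x : ℕ → Polynomial ℂ)
    (hdeg : ∀ j, (x j).natDegree = j)
    (hortho : ∀ j k, ∫ z, (starRingEnd ℂ) ((x j).eval z) * (x k).eval z ∂μ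
      = if j = k then 1 else 0)
    (n : ℕ)
    (Xp : Polynomial ℂ)
    (hXmonic : Xp.Monic)
    (hXdeg : Xp.natDegree = n)
    (hXorth : ∀ j < n, ∫ z, (starRingEnd ℂ) z ^ j * Xp.eval z ∂μ = 0)
    (A : Matrix (Fin n) (Fin n) ℂ)
    (hA : ∀ j k : Fin n, A j k
      = ∫ z, (starRingEnd ℂ) ((x (j : ℕ)).eval z) * (z * (x (k : ℕ)).eval z) ∂μ) :
    A.charpoly = Xp := by
  have hmom : HasFiniteMoments μ := hmom
  have hXorth' (j : ℕ) (hj : j < n) : hmom.innerₗ (x j) Xp = 0 :=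
    hmom.innerₗ_eq_zero_of_natDegree_lt hXorth (by rw [hdeg]; exact hj)
  have hdvd : Xp ∣ A.charpoly := by
    rcases n.eq_zero_or_pos with rfl | hn
    · simp [hXmonic.natDegree_eq_zero.mp hXdeg]
    have hx₀ : IsUnit (x 0) := isUnit_iff_degree_eq_zero.mpr
      (by rw [degree_eq_natDegree (hmom.ne_zero_of_orthonormal hortho 0), hdeg]; rfl)
    rw [← Matrix.charpoly_transpose, Matrix.charpoly]
    refine Matrix.dvd_det_of_forall_dvd_mulVec _ (fun k : Fin n => x k) (fun k => ?_)
      (i := ⟨0, hn⟩) hx₀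
    have hcol : A.transpose.charmatrix.mulVec (fun k : Fin n => x k) k
        = X * x k - ∑ j : Fin n, C (A j k) * x j := by
      rw [Matrix.charmatrix_mulVec]
      simp [Matrix.mulVec, dotProduct]
    rw [hcol]
    simpa only [hA, HasFiniteMoments.innerₗ_apply, eval_mul, eval_X]
      using hmom.dvd_X_mul_sub_sum_innerₗ hortho hdeg hXmonic hXdeg hXorth' k.isLt
  exact eq_of_monic_of_dvd_of_natDegree_le hXmonic A.charpoly_monic hdvd (by simp [hXdeg])
end

section
/- (Interpolation lemma for Markov–Stieltjes) Fix distinct real points x_1 < ... < x_n and 1 ≤ ℓ < n. Then there is a real polynomial Q of degree at most 2n−2 such that Q(x_j) = 1 for j = 1,...,ℓ, Q(x_j) = 0 for j = ℓ+1,...,n, and Q(x) ≥ χ_{(−∞, x_ℓ]}(x) for all real x. -/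
open Polynomial

/-!
Let `a = x_ℓ`, `W = ∏_{j > ℓ} (X - x_j)` and `Q = W² G`, where `G` is the Newton (Hermite)
interpolant of `g = 1 / W²` at the nodes `a, x_1, x_1, …, x_{ℓ-1}, x_{ℓ-1}`. The function `g`
lies in the convex cone generated by products of `t ↦ (z - t)⁻¹` with poles `z > a`, and this
cone is closed under divided differences at points `≤ a`. Hence every Newton coefficient of `G`
is nonnegative, so `G ≥ 0` on `[a, ∞)`, and the remainder `g - G = (t - a) ∏ (t - x_i)² ρ` has
`ρ ≥ 0` on `(-∞, a]`, so `G ≥ g`, i.e. `Q ≥ 1`, there.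
-/

inductive InvCone (b : ℝ) : (ℝ → ℝ) → Prop
  | one : InvCone b fun _ => 1
  | inv_mul {z : ℝ} (hz : b < z) {ρ : ℝ → ℝ} : InvCone b ρ → InvCone b fun t => (z - t)⁻¹ * ρ t
  | add {ρ₁ ρ₂ : ℝ → ℝ} : InvCone b ρ₁ → InvCone b ρ₂ → InvCone b fun t => ρ₁ t + ρ₂ t
  | smul {c : ℝ} (hc : 0 ≤ c) {ρ : ℝ → ℝ} : InvCone b ρ → InvCone b fun t => c * ρ t

namespace InvCone

variable {b : ℝ} {ρ : ℝ → ℝ}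

theorem zero : InvCone b fun _ => 0 := by
  simpa using smul le_rfl (one (b := b))

theorem nonneg (h : InvCone b ρ) {t : ℝ} (ht : t ≤ b) : 0 ≤ ρ t := by
  induction h with
  | one => exact zero_le_one
  | inv_mul hz _ ih => exact mul_nonneg (inv_nonneg.2 (by linarith)) ih
  | add _ _ ih₁ ih₂ => exact add_nonneg ih₁ ih₂
  | smul hc _ ih => exact mul_nonneg hc ih

theorem exists_dividedDifference (h : InvCone b ρ) {τ : ℝ} (hτ : τ ≤ b) :
    ∃ ρ', InvCone b ρ' ∧ ∀ t ≤ b, ρ t = ρ τ + (t - τ) * ρ' t := by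
  induction h with
  | one => exact ⟨_, zero, fun t _ => by simp⟩
  | @inv_mul z hz ρ hρ ih =>
    obtain ⟨ρ', hρ', hdiff⟩ := ih
    have hzτ : 0 < z - τ := by linarith
    refine ⟨fun t => (z - t)⁻¹ * ρ' t + ((z - τ)⁻¹ * ρ τ) * ((z - t)⁻¹ * 1),
      add (inv_mul hz hρ') (smul (mul_nonneg (inv_nonneg.2 hzτ.le) (hρ.nonneg hτ))
        (inv_mul hz one)),
      fun t ht => ?_⟩
    have hzt : z - t ≠ 0 := by linarith
    beta_reduce
    rw [hdiff t ht]
    field_simp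
    ring
  | add _ _ ih₁ ih₂ =>
    obtain ⟨ρ₁', h₁, e₁⟩ := ih₁
    obtain ⟨ρ₂', h₂, e₂⟩ := ih₂
    exact ⟨_, add h₁ h₂, fun t ht => by beta_reduce; rw [e₁ t ht, e₂ t ht]; ring⟩
  | smul hc _ ih =>
    obtain ⟨ρ', h', e⟩ := ih
    exact ⟨_, smul hc h', fun t ht => by beta_reduce; rw [e t ht]; ring⟩

theorem exists_newton_expansion (h : InvCone b ρ) (L : List ℝ) (hL : ∀ τ ∈ L, τ ≤ b) :
    ∃ (G : ℝ[X]) (ρ' : ℝ → ℝ), G.degree < L.length ∧ InvCone b ρ' ∧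
      (∀ t, b ≤ t → 0 ≤ G.eval t) ∧
      ∀ t ≤ b, ρ t = G.eval t + (L.map (t - ·)).prod * ρ' t := by
  induction L generalizing ρ with
  | nil => exact ⟨0, ρ, by simp, h, by simp, by simp⟩
  | cons τ L ih =>
    have hτ : τ ≤ b := hL τ List.mem_cons_self
    obtain ⟨ρ₁, hρ₁, hdiff⟩ := h.exists_dividedDifference hτ
    obtain ⟨G, ρ', hG, hρ', hGnonneg, hrem⟩ :=
      ih hρ₁ fun σ hσ => hL σ (List.mem_cons_of_mem τ hσ)
    refine ⟨C (ρ τ) + (X - C τ) * G, ρ', ?_, hρ', fun t ht => ?_, fun t ht => ?_⟩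
    · rw [List.length_cons, Nat.cast_succ]
      refine (degree_add_le _ _).trans_lt (max_lt ?_ ?_)
      · exact degree_C_le.trans_lt (by exact_mod_cast Nat.succ_pos _)
      · rw [degree_mul, degree_X_sub_C, add_comm]
        exact WithBot.add_lt_add_right (by simp) hG
    · simp only [eval_add, eval_mul, eval_sub, eval_X, eval_C]
      exact add_nonneg (h.nonneg hτ) (mul_nonneg (by linarith) (hGnonneg t ht))
    · simp only [List.map_cons, List.prod_cons, eval_add, eval_mul, eval_sub, eval_X, eval_C]
      rw [hdiff t ht, hrem t ht]
      ring

theorem inv_prod_sub_sq {zs : List ℝ} (hzs : ∀ z ∈ zs, b < z) :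
    InvCone b fun t => ((zs.map (t - ·)).prod ^ 2)⁻¹ := by
  induction zs with
  | nil => simpa using one
  | cons z zs ih =>
    have hz : b < z := hzs z List.mem_cons_self
    have ih := ih fun y hy => hzs y (List.mem_cons_of_mem z hy)
    convert inv_mul hz (inv_mul hz ih) using 2 with t
    rw [List.map_cons, List.prod_cons, mul_pow, mul_inv, ← neg_sub z t, neg_sq, sq, mul_inv,
      mul_assoc]

end InvCone

theorem exists_interpolating_majorant (a : ℝ) (ys zs : List ℝ) (hys : ∀ y ∈ ys, y ≤ a)
    (hzs : ∀ z ∈ zs, a < z) :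
    ∃ Q : ℝ[X], Q.degree ≤ (2 * ys.length + 2 * zs.length : ℕ) ∧ (∀ y ∈ a :: ys, Q.eval y = 1) ∧
      (∀ z ∈ zs, Q.eval z = 0) ∧ ∀ t, (if t ≤ a then (1 : ℝ) else 0) ≤ Q.eval t := by
  set W : ℝ[X] := (zs.map fun z => X - C z).prod
  have hW : ∀ t, W.eval t = (zs.map (t - ·)).prod := by
    simp [W, eval_list_prod, Function.comp_def]
  have hWne : ∀ t ≤ a, W.eval t ≠ 0 := fun t ht => by
    rw [hW]
    refine List.prod_ne_zero fun h0 => ?_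
    obtain ⟨z, hz, hzt⟩ := List.mem_map.1 h0
    linarith [hzs z hz, sub_eq_zero.1 hzt]
  set N : ℝ → ℝ := fun t => ((a :: (ys ++ ys)).map (t - ·)).prod
  have hN : ∀ t, N t = (t - a) * (ys.map (t - ·)).prod ^ 2 := fun t => by
    simp only [N, List.map_cons, List.map_append, List.prod_cons, List.prod_append, sq]
  obtain ⟨G, ρ, hG, hρ, hGnonneg, hrem⟩ := (InvCone.inv_prod_sub_sq hzs).exists_newton_expansion
    (a :: (ys ++ ys)) (by simpa [or_self] using hys)
  have hQ : ∀ t ≤ a, (W ^ 2 * G).eval t = 1 - W.eval t ^ 2 * N t * ρ t := fun t ht => by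
    have := hrem t ht
    rw [← hW] at this
    rw [eval_mul, eval_pow, eq_sub_iff_add_eq, mul_assoc, ← mul_add, ← this,
      mul_inv_cancel₀ (pow_ne_zero 2 (hWne t ht))]
  refine ⟨W ^ 2 * G, ?_, fun y hy => ?_, fun z hz => ?_, fun t => ?_⟩
  · have hWdeg : W.natDegree ≤ zs.length :=
      (natDegree_list_prod_le _).trans (by simp [Function.comp_def])
    have hGdeg : G.natDegree ≤ 2 * ys.length := by
      have hlen : (a :: (ys ++ ys)).length = 2 * ys.length + 1 := by simp; omega
      rw [hlen] at hG
      exact natDegree_le_of_degree_le (Order.le_of_lt_succ hG)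
    refine degree_le_of_natDegree_le ((natDegree_mul_le).trans ?_)
    have := natDegree_pow_le (p := W) (n := 2)
    omega
  · have hya : y ≤ a := by
      rcases List.mem_cons.1 hy with rfl | hy
      exacts [le_rfl, hys y hy]
    have hNy : N y = 0 := List.prod_eq_zero (List.mem_map.2 ⟨y, by simp_all, sub_self y⟩)
    rw [hQ y hya, hNy, mul_zero, zero_mul, sub_zero]
  · rw [eval_mul, eval_pow, hW, List.prod_eq_zero (List.mem_map.2 ⟨z, hz, sub_self z⟩)]
    ring
  · split_ifs with ht
    · have hremainder : W.eval t ^ 2 * N t * ρ t ≤ 0 :=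
        calc W.eval t ^ 2 * N t * ρ t
            = (t - a) * (W.eval t ^ 2 * (ys.map (t - ·)).prod ^ 2 * ρ t) := by rw [hN]; ring
          _ ≤ 0 := mul_nonpos_of_nonpos_of_nonneg (by linarith)
            (mul_nonneg (by positivity) (hρ.nonneg ht))
      linarith [hQ t ht]
    · rw [eval_mul, eval_pow]
      exact mul_nonneg (sq_nonneg _) (hGnonneg t (le_of_not_ge ht))

/-- Interpolation lemma for the Markov–Stieltjes inequalities: given distinct
real points `x_1 < … < x_n` and `1 ≤ ℓ < n`, there is a polynomial `Q` of degree
at most `2n − 2` with `Q(x_j) = 1` for `j ≤ ℓ`, `Q(x_j) = 0` for `j > ℓ`, and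
`Q ≥ χ_{(−∞, x_ℓ]}` everywhere. -/
theorem markov_stieltjes_interpolation
    (n : ℕ) (x : Fin n → ℝ) (hx : StrictMono x)
    (ℓ : ℕ) (hℓ1 : 1 ≤ ℓ) (hℓn : ℓ < n) :
    ∃ Q : Polynomial ℝ,
      Q.degree ≤ (2 * n - 2 : ℕ) ∧
      (∀ j : Fin n, Q.eval (x j) = if (j : ℕ) < ℓ then 1 else 0) ∧
      (∀ t : ℝ, (if t ≤ x ⟨ℓ - 1, by omega⟩ then (1 : ℝ) else 0) ≤ Q.eval t) := by
  set ys := List.ofFn fun i : Fin (ℓ - 1) => x ⟨i, by omega⟩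
  set zs := List.ofFn fun i : Fin (n - ℓ) => x ⟨ℓ + i, by omega⟩
  obtain ⟨Q, hdeg, hleft, hright, hmajor⟩ :=
    exists_interpolating_majorant (x ⟨ℓ - 1, by omega⟩) ys zs
      (fun y hy => by
        obtain ⟨i, rfl⟩ := List.mem_ofFn.1 hy
        exact hx.monotone (Fin.mk_le_mk.2 (by omega)))
      (fun z hz => by
        obtain ⟨i, rfl⟩ := List.mem_ofFn.1 hz
        exact hx (Fin.mk_lt_mk.2 (by omega)))
  refine ⟨Q, ?_, fun j => ?_, hmajor⟩
  · rw [List.length_ofFn, List.length_ofFn] at hdeg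
    convert hdeg using 2
    omega
  split_ifs with hj
  · refine hleft _ (List.mem_cons.2 ?_)
    rcases lt_or_ge (j : ℕ) (ℓ - 1) with hj' | hj'
    · exact Or.inr (List.mem_ofFn.2 ⟨⟨j, hj'⟩, rfl⟩)
    · exact Or.inl (congrArg x (Fin.ext (by simp; omega)))
  · exact hright _ (List.mem_ofFn.2 ⟨⟨j - ℓ, by omega⟩, congrArg x (Fin.ext (by simp; omega))⟩)
end

section
/- (Markov–Stieltjes inequality, upper bound) Let μ be a measure on ℝ with finite moments, x_0 ∈ ℝ, and let x_1^{(n)} < ... < x_n^{(n)} with associated weights λ_j^{(n)} = K_{n−1}(x_j^{(n)}, x_j^{(n)})^{−1} be the Gauss-type quadrature nodes and Cotes numbers passing through x_0. Then Σ_{j : x_j^{(n)} ≤ x_0} K_{n−1}(x_j^{(n)}, x_j^{(n)})^{−1} ≥ μ((−∞, x_0]). -/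
/-!
Apply the quadrature rule to the Hermite interpolant `Q`, of degree `≤ 2n - 2`, of the step function
`1_{(-∞, x₀]}` at the nodes: `Q = 1` at the nodes `≤ x₀`, `Q = 0` at the nodes `> x₀`, and `Q' = 0`
at every node except `x₀`. The quadrature sum of `Q` is then exactly `Σ_{t_j ≤ x₀} λ_j`, while
`∫ Q dμ ≥ μ((-∞, x₀])` as soon as `Q ≥ 1_{(-∞, x₀]}`.

For that majorization: `Q'` vanishes at the `n - 1` nodes other than `x₀` and, by Rolle, at a point
of each of the `n - 2` gaps between nodes other than the one to the right of `x₀`. These are all the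
`2n - 3` roots its degree allows, so the sign of `Q'` is read off the factorization: `Q` falls on
the left tail and on the gap right of `x₀`, rises on the right tail, and rises then falls on every
other gap. Hence on each gap `Q` stays above the smaller of its values at the two ends, which
are `0` or `1`.
-/

open MeasureTheory Polynomial Set

namespace Polynomial

theorem eval_derivative_eq_zero_of_sq_dvd {R : Type*} [CommRing R] {a : R} {q : R[X]}
    (h : (X - C a) ^ 2 ∣ q) : q.derivative.eval a = 0 := by
  obtain ⟨r, rfl⟩ := h
  simp [derivative_mul, derivative_pow]

theorem eq_C_leadingCoeff_mul_prod_of_natDegree_le {R : Type*} [CommRing R] [IsDomain R]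
    {P : R[X]} (hP : P ≠ 0) {M : Multiset R} (hM : M.Nodup) (hroot : ∀ a ∈ M, P.IsRoot a)
    (hdeg : P.natDegree ≤ Multiset.card M) :
    P = C P.leadingCoeff * (M.map fun a => X - C a).prod := by
  have hle : M ≤ P.roots :=
    (Multiset.le_iff_subset hM).2 fun a ha => (mem_roots hP).2 (hroot a ha)
  have hroots : M = P.roots := Multiset.eq_of_le_of_card_le hle ((card_roots' P).trans hdeg)
  have hcard : Multiset.card P.roots = P.natDegree := le_antisymm (card_roots' P) (hroots ▸ hdeg)
  rw [hroots]
  exact (C_leadingCoeff_mul_prod_multiset_X_sub_C hcard).symm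

theorem monotoneOn_eval_of_derivative_nonneg {p : ℝ[X]} {D : Set ℝ} (hD : Convex ℝ D)
    (h : ∀ x ∈ interior D, 0 ≤ p.derivative.eval x) : MonotoneOn (fun x => p.eval x) D :=
  monotoneOn_of_deriv_nonneg hD p.continuousOn p.differentiableOn
    (by simpa only [Polynomial.deriv] using h)

theorem antitoneOn_eval_of_derivative_nonpos {p : ℝ[X]} {D : Set ℝ} (hD : Convex ℝ D)
    (h : ∀ x ∈ interior D, p.derivative.eval x ≤ 0) : AntitoneOn (fun x => p.eval x) D :=
  antitoneOn_of_deriv_nonpos hD p.continuousOn p.differentiableOn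
    (by simpa only [Polynomial.deriv] using h)

end Polynomial

theorem IsCoprime.exists_dvd_sub_one_dvd_natDegree_lt {R : Type*} [CommRing R] {w₁ w₂ : R[X]}
    (h : IsCoprime w₁ w₂) (hw₁ : w₁.Monic) (hw₁1 : w₁ ≠ 1) :
    ∃ Q : R[X], w₁ ∣ Q - 1 ∧ w₂ ∣ Q ∧
      Q.natDegree < w₁.natDegree + w₂.natDegree := by
  obtain ⟨u, v, huv⟩ := h
  refine ⟨v %ₘ w₁ * w₂, ⟨-u - v /ₘ w₁ * w₂, ?_⟩, dvd_mul_left _ _, ?_⟩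
  · linear_combination w₂ * modByMonic_add_div v w₁ + huv
  · exact natDegree_mul_le.trans_lt
      (Nat.add_lt_add_right (natDegree_modByMonic_lt v hw₁ hw₁1) _)

theorem min_le_of_monotoneOn_of_antitoneOn {α β : Type*} [LinearOrder α] [LinearOrder β]
    {f : α → β} {a b c x : α} (h₁ : MonotoneOn f (Icc a c)) (h₂ : AntitoneOn f (Icc c b))
    (hc : c ∈ Icc a b) (hx : x ∈ Icc a b) : min (f a) (f b) ≤ f x := by
  rcases le_total x c with hxc | hcx
  · exact (min_le_left _ _).trans (h₁ ⟨le_rfl, hc.1⟩ ⟨hx.1, hxc⟩ hx.1)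
  · exact (min_le_right _ _).trans (h₂ ⟨hcx, hx.2⟩ ⟨hc.2, le_rfl⟩ hx.2)

theorem exists_mem_Ioc_succ_of_mem_Ioc {α : Type*} [LinearOrder α] (τ : ℕ → α) {a b : ℕ}
    (hab : a ≤ b) {x : α} (hx : x ∈ Ioc (τ a) (τ b)) :
    ∃ i ∈ Finset.Ico a b, x ∈ Ioc (τ i) (τ (i + 1)) := by
  induction b, hab using Nat.le_induction with
  | base => exact absurd (hx.1.trans_le hx.2) (lt_irrefl _)
  | succ b hab ih =>
    rcases le_or_gt x (τ b) with h | h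
    · obtain ⟨i, hi, hxi⟩ := ih ⟨hx.1, h⟩
      obtain ⟨hai, hib⟩ := Finset.mem_Ico.1 hi
      exact ⟨i, Finset.mem_Ico.2 ⟨hai, hib.trans (Nat.lt_succ_self b)⟩, hxi⟩
    · exact ⟨b, Finset.mem_Ico.2 ⟨hab, by omega⟩, h, hx.2⟩

structure IsBoundedBelowByNodes (f : ℝ → ℝ) (τ : ℕ → ℝ) (N : ℕ) : Prop where
  antitoneOn_Iic : AntitoneOn f (Iic (τ 0))
  monotoneOn_Ici : MonotoneOn f (Ici (τ N))
  min_le : ∀ i < N, ∀ x ∈ Icc (τ i) (τ (i + 1)), min (f (τ i)) (f (τ (i + 1))) ≤ f x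

namespace IsBoundedBelowByNodes

variable {f : ℝ → ℝ} {τ : ℕ → ℝ} {N : ℕ}

theorem le_of_forall_le_node_of_le (hf : IsBoundedBelowByNodes f τ N) {j : ℕ} (hj : j ≤ N)
    {m : ℝ} (hm : ∀ k ≤ j, m ≤ f (τ k)) {x : ℝ} (hx : x ≤ τ j) : m ≤ f x := by
  rcases le_or_gt x (τ 0) with h | h
  · exact (hm 0 (Nat.zero_le j)).trans (hf.antitoneOn_Iic h self_mem_Iic h)
  · obtain ⟨i, hi, hxi⟩ := exists_mem_Ioc_succ_of_mem_Ioc τ (Nat.zero_le j) ⟨h, hx⟩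
    obtain ⟨-, hij⟩ := Finset.mem_Ico.1 hi
    exact (le_min (hm i hij.le) (hm (i + 1) hij)).trans
      (hf.min_le i (hij.trans_le hj) x (Ioc_subset_Icc_self hxi))

theorem le_of_forall_le_node (hf : IsBoundedBelowByNodes f τ N) {m : ℝ}
    (hm : ∀ k ≤ N, m ≤ f (τ k)) (x : ℝ) : m ≤ f x := by
  rcases le_or_gt x (τ N) with h | h
  · exact hf.le_of_forall_le_node_of_le le_rfl hm h
  · exact (hm N le_rfl).trans (hf.monotoneOn_Ici self_mem_Ici h.le h.le)

end IsBoundedBelowByNodes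

/-- Up to a positive factor, the derivative of an `IsHermiteStep` polynomial: `ξ i` is a Rolle point
in the gap `(τ i, τ (i + 1))` and `G` collects the gaps other than the one to the right of
`τ j₀`. -/
def interlacedProd (τ ξ : ℕ → ℝ) (N : ℕ) (G : Finset ℕ) (x : ℝ) : ℝ :=
  (x - τ N) * ∏ i ∈ G, (x - τ i) * (x - ξ i)

section Interlacing

variable {τ ξ : ℕ → ℝ} {N : ℕ} {G : Finset ℕ} {x : ℝ}

theorem strictMono_of_forall_mem_Ioo (hξ : ∀ i, ξ i ∈ Ioo (τ i) (τ (i + 1))) :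
    StrictMono ξ :=
  strictMono_nat_of_lt_succ fun i => (hξ i).2.trans (hξ (i + 1)).1

theorem ne_of_forall_mem_Ioo (hτ : StrictMono τ) (hξ : ∀ i, ξ i ∈ Ioo (τ i) (τ (i + 1)))
    (a b : ℕ) : τ a ≠ ξ b := by
  rcases le_or_gt a b with h | h
  · exact ((hτ.monotone h).trans_lt (hξ b).1).ne
  · exact ((hξ b).2.trans_le (hτ.monotone h)).ne'

theorem lt_or_lt_of_mem_Ioo_of_ne (hτ : StrictMono τ)
    (hξ : ∀ i, ξ i ∈ Ioo (τ i) (τ (i + 1))) {i l : ℕ} (hx : x ∈ Ioo (τ i) (τ (i + 1)))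
    (hl : l ≠ i) : x < τ l ∨ ξ l < x := by
  rcases hl.lt_or_gt with h | h
  · exact Or.inr (((hξ l).2.trans_le (hτ.monotone h)).trans hx.1)
  · exact Or.inl (hx.2.trans_le (hτ.monotone h))

theorem prod_sub_mul_sub_pos {ι : Type*} {s : Finset ι} {a b : ι → ℝ}
    (hab : ∀ i ∈ s, a i ≤ b i) (hx : ∀ i ∈ s, x < a i ∨ b i < x) :
    0 < ∏ i ∈ s, (x - a i) * (x - b i) := by
  refine Finset.prod_pos fun i hi => ?_
  have := hab i hi
  rcases hx i hi with h | h
  · exact mul_pos_of_neg_of_neg (by linarith) (by linarith)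
  · exact mul_pos (by linarith) (by linarith)

theorem interlacedProd_neg_of_lt (hτ : StrictMono τ)
    (hξ : ∀ i, ξ i ∈ Ioo (τ i) (τ (i + 1))) (hx : x < τ 0) : interlacedProd τ ξ N G x < 0 :=
  mul_neg_of_neg_of_pos (sub_neg.2 (hx.trans_le (hτ.monotone (Nat.zero_le N))))
    (prod_sub_mul_sub_pos (fun i _ => (hξ i).1.le)
      fun i _ => Or.inl (hx.trans_le (hτ.monotone (Nat.zero_le i))))

theorem interlacedProd_pos_of_gt (hτ : StrictMono τ)
    (hξ : ∀ i, ξ i ∈ Ioo (τ i) (τ (i + 1)))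
    (hG : ∀ i ∈ G, i < N) (hx : τ N < x) : 0 < interlacedProd τ ξ N G x :=
  mul_pos (sub_pos.2 hx) (prod_sub_mul_sub_pos (fun i _ => (hξ i).1.le)
    fun i hi => Or.inr (((hξ i).2.trans_le (hτ.monotone (hG i hi))).trans hx))

theorem interlacedProd_neg_of_notMem (hτ : StrictMono τ)
    (hξ : ∀ i, ξ i ∈ Ioo (τ i) (τ (i + 1))) {i : ℕ} (hi : i < N) (hiG : i ∉ G)
    (hx : x ∈ Ioo (τ i) (τ (i + 1))) : interlacedProd τ ξ N G x < 0 :=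
  mul_neg_of_neg_of_pos (sub_neg.2 (hx.2.trans_le (hτ.monotone hi)))
    (prod_sub_mul_sub_pos (fun l _ => (hξ l).1.le)
      fun _ hl => lt_or_lt_of_mem_Ioo_of_ne hτ hξ hx (ne_of_mem_of_not_mem hl hiG))

theorem exists_pos_interlacedProd_eq (hτ : StrictMono τ)
    (hξ : ∀ i, ξ i ∈ Ioo (τ i) (τ (i + 1))) {i : ℕ} (hi : i < N) (hiG : i ∈ G)
    (hx : x ∈ Ioo (τ i) (τ (i + 1))) : ∃ r > 0, interlacedProd τ ξ N G x = r * (ξ i - x) := by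
  have hrest : 0 < ∏ l ∈ G.erase i, (x - τ l) * (x - ξ l) :=
    prod_sub_mul_sub_pos (fun l _ => (hξ l).1.le)
      fun l hl => lt_or_lt_of_mem_Ioo_of_ne hτ hξ hx (Finset.ne_of_mem_erase hl)
  have hN : x < τ N := hx.2.trans_le (hτ.monotone hi)
  refine ⟨(τ N - x) * (x - τ i) * ∏ l ∈ G.erase i, (x - τ l) * (x - ξ l),
    mul_pos (mul_pos (sub_pos.2 hN) (sub_pos.2 hx.1)) hrest, ?_⟩
  rw [interlacedProd, ← Finset.mul_prod_erase G _ hiG]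
  ring

end Interlacing

/-- `Q` is the Hermite interpolant of `1_{(-∞, τ j₀]}` at the nodes `τ 0, …, τ N`. The derivative
is left free at `τ j₀`, so that the `2N + 1` conditions match the degree bound `2N`. -/
structure IsHermiteStep (Q : ℝ[X]) (τ : ℕ → ℝ) (N j₀ : ℕ) : Prop where
  natDegree_le : Q.natDegree ≤ 2 * N
  eval_of_le : ∀ i ≤ j₀, Q.eval (τ i) = 1
  derivative_of_lt : ∀ i < j₀, Q.derivative.eval (τ i) = 0
  eval_of_gt : ∀ i, j₀ < i → i ≤ N → Q.eval (τ i) = 0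
  derivative_of_gt : ∀ i, j₀ < i → i ≤ N → Q.derivative.eval (τ i) = 0

theorem exists_isHermiteStep {τ : ℕ → ℝ} (hτ : Function.Injective τ) {N j₀ : ℕ}
    (hj₀ : j₀ ≤ N) : ∃ Q, IsHermiteStep Q τ N j₀ := by
  -- The interpolation conditions say exactly `w₁ ∣ Q - 1` and `w₂ ∣ Q`.
  set w₁ : ℝ[X] := (X - C (τ j₀)) * ∏ i ∈ Finset.range j₀, (X - C (τ i)) ^ 2
  set w₂ : ℝ[X] := ∏ i ∈ Finset.Ioc j₀ N, (X - C (τ i)) ^ 2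
  have hcop := pairwise_coprime_X_sub_C hτ
  have hw : IsCoprime w₁ w₂ := by
    refine IsCoprime.mul_left (IsCoprime.prod_right fun i hi => ?_)
      (IsCoprime.prod_left fun l hl => IsCoprime.prod_right fun i hi => ?_)
    · exact (hcop (by simp at hi; omega)).pow_right
    · exact ((hcop (by simp at hi hl; omega)).pow_left).pow_right
  have hmonic (s : Finset ℕ) : (∏ i ∈ s, (X - C (τ i)) ^ 2).Monic :=
    monic_prod_of_monic _ _ fun i _ => (monic_X_sub_C _).pow 2
  have hdeg (s : Finset ℕ) : (∏ i ∈ s, (X - C (τ i)) ^ 2).natDegree = 2 * s.card := by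
    rw [natDegree_prod_of_monic _ _ fun i _ => (monic_X_sub_C _).pow 2]
    simp [mul_comm]
  have hw₁deg : w₁.natDegree = 2 * j₀ + 1 := by
    rw [(monic_X_sub_C _).natDegree_mul (hmonic _), natDegree_X_sub_C, hdeg, Finset.card_range]
    ring
  have hw₁ : w₁.Monic := (monic_X_sub_C _).mul (hmonic _)
  have hw₁1 : w₁ ≠ 1 := ne_of_apply_ne natDegree (by rw [hw₁deg, natDegree_one]; omega)
  obtain ⟨Q, h₁, h₂, hQ⟩ := hw.exists_dvd_sub_one_dvd_natDegree_lt hw₁ hw₁1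
  have hlow (i : ℕ) (hi : i < j₀) : (X - C (τ i)) ^ 2 ∣ Q - 1 :=
    ((Finset.dvd_prod_of_mem (fun i => (X - C (τ i)) ^ 2) (Finset.mem_range.2 hi)).trans
      (dvd_mul_left _ (X - C (τ j₀)))).trans h₁
  have hhigh (i : ℕ) (h : j₀ < i) (h' : i ≤ N) : (X - C (τ i)) ^ 2 ∣ Q :=
    (Finset.dvd_prod_of_mem (fun i => (X - C (τ i)) ^ 2) (Finset.mem_Ioc.2 ⟨h, h'⟩)).trans h₂
  refine ⟨Q, ?_, fun i hi => ?_, fun i hi => ?_, fun i h h' => ?_, fun i h h' => ?_⟩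
  · rw [hw₁deg, hdeg, Nat.card_Ioc] at hQ
    omega
  · have : X - C (τ i) ∣ Q - 1 := by
      rcases hi.lt_or_eq with hi | rfl
      · exact (dvd_pow_self _ two_ne_zero).trans (hlow i hi)
      · exact (dvd_mul_right _ _).trans h₁
    simpa [sub_eq_zero] using dvd_iff_isRoot.1 this
  · simpa using eval_derivative_eq_zero_of_sq_dvd (hlow i hi)
  · exact dvd_iff_isRoot.1 ((dvd_pow_self _ two_ne_zero).trans (hhigh i h h'))
  · exact eval_derivative_eq_zero_of_sq_dvd (hhigh i h h')

namespace IsHermiteStep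

variable {Q : ℝ[X]} {τ : ℕ → ℝ} {N j₀ : ℕ}

theorem eval_succ_eq (hQ : IsHermiteStep Q τ N j₀) {i : ℕ}
    (hi : i ∈ (Finset.range N).erase j₀) : Q.eval (τ (i + 1)) = Q.eval (τ i) := by
  obtain ⟨hij, hiN⟩ : i ≠ j₀ ∧ i < N := by simpa using hi
  rcases hij.lt_or_gt with h | h
  · rw [hQ.eval_of_le _ h, hQ.eval_of_le _ h.le]
  · rw [hQ.eval_of_gt _ (by omega) hiN, hQ.eval_of_gt _ h hiN.le]

theorem exists_interlaced_roots_derivative (hQ : IsHermiteStep Q τ N j₀) (hτ : StrictMono τ) :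
    ∃ ξ : ℕ → ℝ, (∀ i, ξ i ∈ Ioo (τ i) (τ (i + 1))) ∧
      ∀ i ∈ (Finset.range N).erase j₀, Q.derivative.eval (ξ i) = 0 := by
  have (i : ℕ) : ∃ y ∈ Ioo (τ i) (τ (i + 1)),
      i ∈ (Finset.range N).erase j₀ → Q.derivative.eval y = 0 := by
    by_cases hi : i ∈ (Finset.range N).erase j₀
    · obtain ⟨y, hy, hy'⟩ := exists_deriv_eq_zero (hτ (Nat.lt_succ_self i)) Q.continuousOn
        (hQ.eval_succ_eq hi).symm
      exact ⟨y, hy, fun _ => by rwa [Polynomial.deriv] at hy'⟩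
    · obtain ⟨y, hy⟩ := exists_between (hτ (Nat.lt_succ_self i))
      exact ⟨y, hy, fun h => absurd h hi⟩
  choose ξ hξ hroot using this
  exact ⟨ξ, hξ, hroot⟩

theorem derivative_ne_zero (hQ : IsHermiteStep Q τ N j₀) (hj₀ : j₀ < N) :
    Q.derivative ≠ 0 := by
  intro h
  have hC := eq_C_of_natDegree_eq_zero (derivative_eq_zero.1 h)
  have h₁ := hQ.eval_of_le j₀ le_rfl
  have h₀ := hQ.eval_of_gt (j₀ + 1) (Nat.lt_succ_self j₀) hj₀
  rw [hC, eval_C] at h₁ h₀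
  exact one_ne_zero (h₁.symm.trans h₀)

theorem eval_derivative_eq (hQ : IsHermiteStep Q τ N j₀) (hτ : StrictMono τ) (hj₀ : j₀ < N)
    {ξ : ℕ → ℝ} (hξ : ∀ i, ξ i ∈ Ioo (τ i) (τ (i + 1)))
    (hroot : ∀ i ∈ (Finset.range N).erase j₀, Q.derivative.eval (ξ i) = 0) (x : ℝ) :
    Q.derivative.eval x =
      Q.derivative.leadingCoeff * interlacedProd τ ξ N ((Finset.range N).erase j₀) x := by
  set E := (Finset.range (N + 1)).erase j₀
  set G := (Finset.range N).erase j₀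
  set M := E.val.map τ + G.val.map ξ
  have hM : M.Nodup := Multiset.nodup_add.2 ⟨E.nodup.map hτ.injective,
    G.nodup.map (strictMono_of_forall_mem_Ioo hξ).injective,
    Multiset.disjoint_left.2 fun ha hb => by
      obtain ⟨a, -, rfl⟩ := Multiset.mem_map.1 ha
      obtain ⟨b, -, hb⟩ := Multiset.mem_map.1 hb
      exact ne_of_forall_mem_Ioo hτ hξ a b hb.symm⟩
  have hroots : ∀ y ∈ M, Q.derivative.IsRoot y := by
    intro y hy
    rcases Multiset.mem_add.1 hy with hy | hy <;> obtain ⟨i, hi, rfl⟩ := Multiset.mem_map.1 hy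
    · obtain ⟨hij, hiN⟩ := Finset.mem_erase.1 (Finset.mem_def.2 hi)
      rcases hij.lt_or_gt with h | h
      · exact hQ.derivative_of_lt i h
      · exact hQ.derivative_of_gt i h (Nat.lt_succ_iff.1 (Finset.mem_range.1 hiN))
    · exact hroot i hi
  have hcard : Q.derivative.natDegree ≤ Multiset.card M := by
    have := (natDegree_derivative_le Q).trans (Nat.sub_le_sub_right hQ.natDegree_le 1)
    simp only [M, E, G, Multiset.card_add, Multiset.card_map, Finset.card_val,
      Finset.card_erase_of_mem (Finset.mem_range.2 hj₀),
      Finset.card_erase_of_mem (Finset.mem_range.2 (hj₀.trans (Nat.lt_succ_self N))),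
      Finset.card_range]
    omega
  have hE : E = insert N G := by
    ext i
    simp only [E, G, Finset.mem_erase, Finset.mem_insert, Finset.mem_range]
    omega
  have hNG : N ∉ G := by simp [G]
  conv_lhs => rw [eq_C_leadingCoeff_mul_prod_of_natDegree_le (hQ.derivative_ne_zero hj₀) hM
    hroots hcard]
  simp only [M, eval_mul, eval_C, eval_prod, Multiset.map_add, Multiset.prod_add,
    Multiset.map_map, Function.comp_def, eval_sub, eval_X, Finset.prod_map_val, hE,
    Finset.prod_insert hNG, interlacedProd, Finset.prod_mul_distrib]
  ring

theorem exists_derivative_eq_mul_interlacedProd (hQ : IsHermiteStep Q τ N j₀)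
    (hτ : StrictMono τ) (hj₀ : j₀ < N) :
    ∃ ξ : ℕ → ℝ, (∀ i, ξ i ∈ Ioo (τ i) (τ (i + 1))) ∧ ∃ c > 0, ∀ x,
      Q.derivative.eval x = c * interlacedProd τ ξ N ((Finset.range N).erase j₀) x := by
  obtain ⟨ξ, hξ, hroot⟩ := hQ.exists_interlaced_roots_derivative hτ
  have hP := hQ.eval_derivative_eq hτ hj₀ hξ hroot
  refine ⟨ξ, hξ, _, ?_, hP⟩
  -- `Q` falls from `1` to `0` on the gap `(τ j₀, τ (j₀ + 1))`, where the product is negative.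
  have hgap := hτ (Nat.lt_succ_self j₀)
  obtain ⟨ζ, hζ, hslope⟩ := exists_deriv_eq_slope (fun x => Q.eval x) hgap Q.continuousOn
    Q.differentiableOn
  rw [Polynomial.deriv, hQ.eval_of_le j₀ le_rfl,
    hQ.eval_of_gt (j₀ + 1) (Nat.lt_succ_self j₀) hj₀, hP] at hslope
  have hneg :
      Q.derivative.leadingCoeff * interlacedProd τ ξ N ((Finset.range N).erase j₀) ζ < 0 := by
    rw [hslope]
    exact div_neg_of_neg_of_pos (by norm_num) (sub_pos.2 hgap)
  exact pos_of_mul_neg_left hneg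
    (interlacedProd_neg_of_notMem hτ hξ hj₀ (by simp) hζ).le

theorem isBoundedBelowByNodes (hQ : IsHermiteStep Q τ N j₀) (hτ : StrictMono τ)
    (hj₀ : j₀ < N) : IsBoundedBelowByNodes (fun x => Q.eval x) τ N := by
  obtain ⟨ξ, hξ, c, hc, hP⟩ := hQ.exists_derivative_eq_mul_interlacedProd hτ hj₀
  have hG : ∀ i ∈ (Finset.range N).erase j₀, i < N := fun i hi =>
    Finset.mem_range.1 (Finset.mem_of_mem_erase hi)
  refine ⟨antitoneOn_eval_of_derivative_nonpos (convex_Iic _) fun x hx => ?_,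
    monotoneOn_eval_of_derivative_nonneg (convex_Ici _) fun x hx => ?_, fun i hi x hx => ?_⟩
  · rw [interior_Iic] at hx
    rw [hP]
    exact mul_nonpos_of_nonneg_of_nonpos hc.le (interlacedProd_neg_of_lt hτ hξ hx).le
  · rw [interior_Ici] at hx
    rw [hP]
    exact mul_nonneg hc.le (interlacedProd_pos_of_gt hτ hξ hG hx).le
  by_cases hiG : i ∈ (Finset.range N).erase j₀
  · have hsign (y : ℝ) (hy : y ∈ Ioo (τ i) (τ (i + 1))) :
        ∃ r > 0, Q.derivative.eval y = r * (ξ i - y) := by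
      obtain ⟨r, hr, h⟩ := exists_pos_interlacedProd_eq hτ hξ hi hiG hy
      exact ⟨c * r, mul_pos hc hr, by rw [hP, h, mul_assoc]⟩
    refine min_le_of_monotoneOn_of_antitoneOn
      (monotoneOn_eval_of_derivative_nonneg (convex_Icc _ _) fun y hy => ?_)
      (antitoneOn_eval_of_derivative_nonpos (convex_Icc _ _) fun y hy => ?_)
      ⟨(hξ i).1.le, (hξ i).2.le⟩ hx
    · rw [interior_Icc] at hy
      obtain ⟨r, hr, h⟩ := hsign y ⟨hy.1, hy.2.trans (hξ i).2⟩
      rw [h]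
      exact mul_nonneg hr.le (sub_nonneg.2 hy.2.le)
    · rw [interior_Icc] at hy
      obtain ⟨r, hr, h⟩ := hsign y ⟨(hξ i).1.trans hy.1, hy.2⟩
      rw [h]
      exact mul_nonpos_of_nonneg_of_nonpos hr.le (sub_nonpos.2 hy.1.le)
  · have hanti := antitoneOn_eval_of_derivative_nonpos (p := Q) (convex_Icc (τ i) (τ (i + 1)))
      fun y hy => by
        rw [interior_Icc] at hy
        rw [hP]
        exact mul_nonpos_of_nonneg_of_nonpos hc.le
          (interlacedProd_neg_of_notMem hτ hξ hi hiG hy).le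
    exact (min_le_right _ _).trans (hanti hx ⟨hx.1.trans hx.2, le_rfl⟩ hx.2)

theorem indicator_le (hQ : IsHermiteStep Q τ N j₀) (hτ : StrictMono τ) (hj₀ : j₀ < N)
    (x : ℝ) : (Iic (τ j₀)).indicator 1 x ≤ Q.eval x := by
  have hB := hQ.isBoundedBelowByNodes hτ hj₀
  by_cases hx : x ≤ τ j₀
  · rw [indicator_of_mem (mem_Iic.2 hx), Pi.one_apply]
    exact hB.le_of_forall_le_node_of_le hj₀.le (fun k hk => (hQ.eval_of_le k hk).ge) hx
  · rw [indicator_of_notMem (mt mem_Iic.1 hx)]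
    refine hB.le_of_forall_le_node (fun k hk => ?_) x
    rcases le_or_gt k j₀ with h | h
    · exact (hQ.eval_of_le k h).ge.trans' zero_le_one
    · exact (hQ.eval_of_gt k h hk).ge

end IsHermiteStep

theorem exists_natDegree_le_indicator_Iic_le {τ : ℕ → ℝ} (hτ : StrictMono τ) {N j₀ : ℕ}
    (hj₀ : j₀ ≤ N) :
    ∃ Q : ℝ[X], Q.natDegree ≤ 2 * N ∧ (∀ i ≤ j₀, Q.eval (τ i) = 1) ∧
      (∀ i, j₀ < i → i ≤ N → Q.eval (τ i) = 0) ∧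
      ∀ x, (Iic (τ j₀)).indicator 1 x ≤ Q.eval x := by
  rcases hj₀.lt_or_eq with hj₀ | rfl
  · obtain ⟨Q, hQ⟩ := exists_isHermiteStep hτ.injective hj₀.le
    exact ⟨Q, hQ.natDegree_le, hQ.eval_of_le, hQ.eval_of_gt, hQ.indicator_le hτ hj₀⟩
  · refine ⟨1, by simp, fun _ _ => eval_one, fun i h h' => absurd h' (not_le.2 h), fun x => ?_⟩
    rw [eval_one]
    exact indicator_apply_le' (fun _ => le_rfl) fun _ => zero_le_one

theorem Fin.exists_strictMono_extension {N : ℕ} {t : Fin (N + 1) → ℝ} (ht : StrictMono t) :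
    ∃ τ : ℕ → ℝ, StrictMono τ ∧ ∀ i : Fin (N + 1), τ i = t i := by
  refine ⟨fun k => t ⟨min k N, by omega⟩ + (k - N : ℕ),
    strictMono_nat_of_lt_succ fun k => ?_, fun i => ?_⟩
  · rcases lt_or_ge k N with hk | hk
    · simpa only [Nat.sub_eq_zero_of_le hk.le, Nat.sub_eq_zero_of_le hk, Nat.cast_zero,
        add_zero] using ht (Fin.mk_lt_mk.2 (by omega) :
          (⟨min k N, by omega⟩ : Fin (N + 1)) < ⟨min (k + 1) N, by omega⟩)
    · have h : min (k + 1) N = min k N := by omega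
      simp only [h, Nat.sub_add_comm hk, Nat.cast_add, Nat.cast_one]
      linarith
  · have hi : (i : ℕ) ≤ N := Nat.lt_succ_iff.1 i.isLt
    simp [Nat.sub_eq_zero_of_le hi, min_eq_left hi]

theorem Fin.exists_natDegree_le_indicator_Iic_le {N : ℕ} {t : Fin (N + 1) → ℝ}
    (ht : StrictMono t) (J : Fin (N + 1)) :
    ∃ Q : ℝ[X], Q.natDegree ≤ 2 * N ∧ (Iic (t J)).indicator 1 ≤ (fun x => Q.eval x) ∧
      ∀ j, Q.eval (t j) = (Iic (t J)).indicator 1 (t j) := by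
  obtain ⟨τ, hτ, hτt⟩ := Fin.exists_strictMono_extension ht
  obtain ⟨Q, hdeg, h₁, h₀, hle⟩ := _root_.exists_natDegree_le_indicator_Iic_le hτ J.is_le
  rw [hτt J] at hle
  refine ⟨Q, hdeg, hle, fun j => ?_⟩
  rcases le_or_gt j J with h | h
  · rw [indicator_of_mem (mem_Iic.2 (ht.monotone h)), Pi.one_apply, ← hτt, h₁ j h]
  · rw [indicator_of_notMem (notMem_Iic.2 (ht h)), ← hτt, h₀ j h j.is_le]

theorem integrable_eval_of_integrable_abs_pow {μ : Measure ℝ}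
    (hmom : ∀ k : ℕ, Integrable (fun x => |x| ^ k) μ) (q : ℝ[X]) :
    Integrable (fun x => q.eval x) μ := by
  simp only [eval_eq_sum_range]
  refine integrable_finsetSum _ fun k _ => Integrable.const_mul ?_ _
  exact (hmom k).mono' (continuous_pow k).aestronglyMeasurable
    (Filter.Eventually.of_forall fun x => by rw [Real.norm_eq_abs, abs_pow])

theorem toReal_measure_le_sum_of_quadrature {α ι : Type*} [MeasurableSpace α] [Fintype ι]
    {μ : Measure α} {s : Set α} [DecidablePred (· ∈ s)] (hs : MeasurableSet s)
    {f : α → ℝ} (hf : Integrable f μ) (hle : s.indicator 1 ≤ f) {t : ι → α} {w : ι → ℝ}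
    (hquad : ∫ x, f x ∂μ = ∑ j, w j * f (t j))
    (hnodes : ∀ j, f (t j) = s.indicator 1 (t j)) :
    (μ s).toReal ≤ ∑ j ∈ Finset.univ.filter (fun j => t j ∈ s), w j := by
  have hind : Integrable (s.indicator 1) μ :=
    hf.mono' (aestronglyMeasurable_one.indicator hs) (Filter.Eventually.of_forall fun x =>
      (Real.norm_of_nonneg (indicator_nonneg (fun _ _ => zero_le_one) x)).le.trans (hle x))
  calc (μ s).toReal = ∫ x, s.indicator 1 x ∂μ := (integral_indicator_one hs).symm
    _ ≤ ∫ x, f x ∂μ := integral_mono hind hf hle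
    _ = ∑ j ∈ Finset.univ.filter (fun j => t j ∈ s), w j := by
      simp only [hquad, hnodes, indicator_apply, Pi.one_apply, mul_ite, mul_one, mul_zero,
        Finset.sum_ite, Finset.sum_const_zero, add_zero]

theorem markov_stieltjes_upper_general
    (μ : Measure ℝ)
    (hmom : ∀ k : ℕ, Integrable (fun t => |t| ^ k) μ)
    (n : ℕ) (x₀ : ℝ)
    (Kd : ℝ → ℝ)
    (t : Fin n → ℝ) (ht : StrictMono t)
    (hnode : ∃ j, t j = x₀)
    (hquad : ∀ Q : Polynomial ℝ, Q.degree ≤ (2 * n - 2 : ℕ) →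
      ∫ s, Q.eval s ∂μ = ∑ j : Fin n, (Kd (t j))⁻¹ * Q.eval (t j)) :
    (μ (Set.Iic x₀)).toReal
      ≤ ∑ j ∈ Finset.univ.filter (fun j : Fin n => t j ≤ x₀), (Kd (t j))⁻¹ := by
  obtain ⟨J, rfl⟩ := hnode
  obtain ⟨N, rfl⟩ := Nat.exists_eq_add_one_of_ne_zero J.pos.ne'
  obtain ⟨Q, hdeg, hle, hnodes⟩ := Fin.exists_natDegree_le_indicator_Iic_le ht J
  exact toReal_measure_le_sum_of_quadrature measurableSet_Iic
    (integrable_eval_of_integrable_abs_pow hmom Q) hle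
    (hquad Q (degree_le_of_natDegree_le (by omega))) hnodes

/-- Markov–Stieltjes upper bound: for the Gauss-type quadrature through `x₀`
with nodes `t 1 < … < t n` and Cotes numbers `K_{n−1}(t_j,t_j)⁻¹`,
`Σ_{t_j ≤ x₀} K_{n−1}(t_j,t_j)⁻¹ ≥ μ((−∞, x₀])`. -/
theorem markov_stieltjes_upper
    (μ : Measure ℝ)
    (hmom : ∀ k : ℕ, Integrable (fun t => |t| ^ k) μ)
    (p : ℕ → Polynomial ℝ)
    (hdeg : ∀ j, (p j).natDegree = j)
    (hortho : ∀ j k, ∫ t, (p j).eval t * (p k).eval t ∂μ = if j = k then 1 else 0)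
    (n : ℕ) (hn : 1 ≤ n) (x₀ : ℝ)
    (Kd : ℝ → ℝ)
    (hKd : ∀ s, Kd s = ∑ j ∈ Finset.range n, ((p j).eval s) ^ 2)
    (t : Fin n → ℝ) (ht : StrictMono t)
    (hnode : ∃ j, t j = x₀)
    (hquad : ∀ Q : Polynomial ℝ, Q.degree ≤ (2 * n - 2 : ℕ) →
      ∫ s, Q.eval s ∂μ = ∑ j : Fin n, (Kd (t j))⁻¹ * Q.eval (t j)) :
    (μ (Set.Iic x₀)).toReal
      ≤ ∑ j ∈ Finset.univ.filter (fun j : Fin n => t j ≤ x₀), (Kd (t j))⁻¹ :=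
  markov_stieltjes_upper_general μ hmom n x₀ Kd t ht hnode hquad
end

section
/- Let μ be a nontrivial measure on ℝ of compact support. For every x_0 ∈ ℝ, lim_{n→∞} K_n(x_0, x_0) = μ({x_0})^{−1} (interpreted as +∞ when μ({x_0}) = 0). -/
/-!
Expanding a polynomial `Q` of degree `≤ n` in the orthonormal basis and applying Cauchy–Schwarz
gives the variational bound `Q(x₀)² ≤ K_n(x₀,x₀) ∫ Q² dμ`, with equality for the kernel polynomial
`Q = ∑ⱼ pⱼ(x₀) pⱼ`. For that `Q`, bounding `∫ Q² dμ` below by the contribution `μ{x₀} Q(x₀)²` of the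
atom gives `K_n(x₀,x₀) μ{x₀} ≤ 1`. Conversely, the trial polynomials `(1 - (x - x₀)²/A²)^k`, with
`A` larger than the distance from `x₀` to the support of `μ`, equal `1` at `x₀` and lie in `[0, 1)`
elsewhere on the support, so by dominated convergence their squared `L²(μ)` norms tend to `μ{x₀}`
and `K_{2k}(x₀,x₀)` is eventually at least their reciprocal. As `K_n(x₀,x₀)` increases with `n`,
it converges to `μ{x₀}⁻¹`.
-/

open MeasureTheory Polynomial Filter Topology

lemma measureReal_singleton_mul_le_integral {α : Type*} [MeasurableSpace α]
    [MeasurableSingletonClass α] {μ : Measure α} {f : α → ℝ} (hf : Integrable f μ)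
    (hf₀ : 0 ≤ᵐ[μ] f) (a : α) :
    μ.real {a} * f a ≤ ∫ t, f t ∂μ := by
  have h := setIntegral_le_integral (s := {a}) hf hf₀
  rwa [integral_singleton, smul_eq_mul] at h

lemma tendsto_integral_pow_measureReal_singleton {α : Type*} [MeasurableSpace α]
    [MeasurableSingletonClass α] {μ : Measure α} [IsFiniteMeasure μ] {f : α → ℝ}
    (hf : AEStronglyMeasurable f μ) {a : α} (hfa : f a = 1) (hlt : ∀ᵐ t ∂μ, t ≠ a → |f t| < 1) :
    Tendsto (fun k : ℕ => ∫ t, f t ^ k ∂μ) atTop (𝓝 (μ.real {a})) := by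
  rw [← integral_indicator_one (measurableSet_singleton a)]
  refine tendsto_integral_of_dominated_convergence (fun _ => 1) (fun k => hf.pow k)
    (integrable_const 1) (fun k => hlt.mono fun t ht => ?_) (hlt.mono fun t ht => ?_)
  · by_cases hta : t = a
    · simp [hta, hfa]
    · rw [norm_pow, Real.norm_eq_abs]
      exact pow_le_one₀ (abs_nonneg _) (ht hta).le
  · by_cases hta : t = a
    · simp [hta, hfa]
    · simpa [hta] using tendsto_pow_atTop_nhds_zero_of_abs_lt_one (ht hta)

lemma abs_sq_one_sub_sq_div_sq_lt_one {t x₀ A : ℝ} (ht : |t - x₀| < A) (htx : t ≠ x₀) :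
    |(1 - (t - x₀) ^ 2 / A ^ 2) ^ 2| < 1 := by
  have hA : 0 < A := (abs_nonneg _).trans_lt ht
  have hu₀ : 0 < (t - x₀) ^ 2 / A ^ 2 :=
    div_pos (pow_two_pos_of_ne_zero (sub_ne_zero.2 htx)) (by positivity)
  have hu₁ : (t - x₀) ^ 2 / A ^ 2 < 1 :=
    (div_lt_one (by positivity)).2 (sq_lt_sq' (abs_lt.1 ht).1 (abs_lt.1 ht).2)
  rw [abs_lt]
  constructor <;> nlinarith

lemma Polynomial.exists_eq_sum_smul_of_natDegree_le_s16 {K : Type*} [Field K] {p : ℕ → K[X]}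
    (hdeg : ∀ j, (p j).degree = j) {Q : K[X]} {n : ℕ} (hQ : Q.natDegree ≤ n) :
    ∃ c : ℕ → K, Q = ∑ j ∈ Finset.range (n + 1), c j • p j := by
  let S : Polynomial.Sequence K := ⟨p, hdeg⟩
  have hQS : Q ∈ Submodule.span K (S '' ↑(Finset.range (n + 1))) := by
    rw [Finset.coe_range,
      S.span_degreeLT fun i _ => (leadingCoeff_ne_zero.2 (S.ne_zero i)).isUnit,
      degreeLT_succ_eq_degreeLE, mem_degreeLE]
    exact degree_le_of_natDegree_le hQ
  obtain ⟨l, hl, rfl⟩ := (Finsupp.mem_span_image_iff_linearCombination K).1 hQS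
  exact ⟨l, Finsupp.linearCombination_apply_of_mem_supported K hl⟩

def OrthonormalPolynomials (μ : Measure ℝ) (p : ℕ → ℝ[X]) : Prop :=
  ∀ j k, ∫ t, (p j).eval t * (p k).eval t ∂μ = if j = k then 1 else 0

/-- The diagonal `K_n(x, x)` of the Christoffel–Darboux kernel. -/
def christoffelDarbouxDiag (p : ℕ → ℝ[X]) (n : ℕ) (x : ℝ) : ℝ :=
  ∑ j ∈ Finset.range (n + 1), (p j).eval x ^ 2

noncomputable def christoffelDarbouxKernel (p : ℕ → ℝ[X]) (n : ℕ) (x : ℝ) : ℝ[X] :=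
  ∑ j ∈ Finset.range (n + 1), (p j).eval x • p j

section ChristoffelDarboux

variable {p : ℕ → ℝ[X]} {n : ℕ} {x : ℝ}

lemma christoffelDarbouxDiag_nonneg : 0 ≤ christoffelDarbouxDiag p n x :=
  Finset.sum_nonneg fun _ _ => sq_nonneg _

lemma monotone_christoffelDarbouxDiag : Monotone fun n => christoffelDarbouxDiag p n x :=
  monotone_nat_of_le_succ fun n => by
    simp only [christoffelDarbouxDiag, Finset.sum_range_succ _ (n + 1)]
    exact le_add_of_nonneg_right (sq_nonneg _)

lemma eval_christoffelDarbouxKernel (t : ℝ) :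
    (christoffelDarbouxKernel p n x).eval t =
      ∑ j ∈ Finset.range (n + 1), (p j).eval x * (p j).eval t := by
  simp [christoffelDarbouxKernel, eval_finsetSum]

lemma eval_christoffelDarbouxKernel_self :
    (christoffelDarbouxKernel p n x).eval x = christoffelDarbouxDiag p n x := by
  simp [eval_christoffelDarbouxKernel, christoffelDarbouxDiag, sq]

end ChristoffelDarboux

namespace OrthonormalPolynomials

variable {μ : Measure ℝ} {p : ℕ → ℝ[X]}

lemma ne_zero (hp : OrthonormalPolynomials μ p) (j : ℕ) : p j ≠ 0 := by
  intro h
  simpa [h] using hp j j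

lemma integrable_eval_mul_eval (hp : OrthonormalPolynomials μ p) (j k : ℕ) :
    Integrable (fun t => (p j).eval t * (p k).eval t) μ := by
  -- `∫ pᵢ² dμ = 1 ≠ 0` forces `pᵢ²` to be integrable, and `|pⱼ pₖ| ≤ pⱼ² + pₖ²`.
  have hsq (i : ℕ) : Integrable (fun t => (p i).eval t * (p i).eval t) μ :=
    Integrable.of_integral_ne_zero (by simp [hp i i])
  refine ((hsq j).add (hsq k)).mono'
    ((p j).continuous.mul (p k).continuous).aestronglyMeasurable (ae_of_all _ fun t => ?_)
  rw [Pi.add_apply, Real.norm_eq_abs, abs_le]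
  constructor <;> nlinarith [sq_nonneg ((p j).eval t + (p k).eval t),
    sq_nonneg ((p j).eval t - (p k).eval t)]

lemma integrable_mul_eval_mul_mul_eval (hp : OrthonormalPolynomials μ p) (a b : ℝ) (j k : ℕ) :
    Integrable (fun t => a * (p j).eval t * (b * (p k).eval t)) μ := by
  simpa only [mul_mul_mul_comm] using (hp.integrable_eval_mul_eval j k).const_mul (a * b)

lemma integrable_sq_sum (hp : OrthonormalPolynomials μ p) (s : Finset ℕ) (c : ℕ → ℝ) :
    Integrable (fun t => (∑ j ∈ s, c j * (p j).eval t) ^ 2) μ := by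
  simp_rw [sq, Finset.sum_mul_sum]
  exact integrable_finsetSum _ fun j _ => integrable_finsetSum _ fun k _ =>
    hp.integrable_mul_eval_mul_mul_eval _ _ j k

lemma integral_sq_sum (hp : OrthonormalPolynomials μ p) (s : Finset ℕ) (c : ℕ → ℝ) :
    ∫ t, (∑ j ∈ s, c j * (p j).eval t) ^ 2 ∂μ = ∑ j ∈ s, c j ^ 2 := by
  simp_rw [sq, Finset.sum_mul_sum]
  rw [integral_finsetSum _ fun j _ => integrable_finsetSum _ fun k _ =>
    hp.integrable_mul_eval_mul_mul_eval _ _ j k]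
  refine Finset.sum_congr rfl fun j hj => ?_
  rw [integral_finsetSum _ fun k _ => hp.integrable_mul_eval_mul_mul_eval _ _ j k]
  simp_rw [mul_mul_mul_comm, integral_const_mul, hp j]
  simp [hj]

theorem eval_sq_le_integral_sq_mul_christoffelDarbouxDiag (hp : OrthonormalPolynomials μ p)
    (hdeg : ∀ j, (p j).natDegree = j) {Q : ℝ[X]} {n : ℕ} (hQ : Q.natDegree ≤ n) (x : ℝ) :
    Q.eval x ^ 2 ≤ (∫ t, Q.eval t ^ 2 ∂μ) * christoffelDarbouxDiag p n x := by
  obtain ⟨c, rfl⟩ := exists_eq_sum_smul_of_natDegree_le_s16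
    (fun j => by rw [degree_eq_natDegree (hp.ne_zero j), hdeg]) hQ
  simp only [eval_finsetSum, eval_smul, smul_eq_mul]
  rw [hp.integral_sq_sum]
  exact Finset.sum_mul_sq_le_sq_mul_sq _ _ _

lemma integral_sq_christoffelDarbouxKernel (hp : OrthonormalPolynomials μ p) (n : ℕ) (x : ℝ) :
    ∫ t, (christoffelDarbouxKernel p n x).eval t ^ 2 ∂μ = christoffelDarbouxDiag p n x := by
  simp_rw [eval_christoffelDarbouxKernel]
  exact hp.integral_sq_sum _ _

theorem christoffelDarbouxDiag_mul_measureReal_le_one (hp : OrthonormalPolynomials μ p)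
    (n : ℕ) (x : ℝ) : christoffelDarbouxDiag p n x * μ.real {x} ≤ 1 := by
  have hint : Integrable (fun t => (christoffelDarbouxKernel p n x).eval t ^ 2) μ := by
    simpa only [eval_christoffelDarbouxKernel] using hp.integrable_sq_sum _ _
  have hatom := measureReal_singleton_mul_le_integral hint (ae_of_all _ fun t => sq_nonneg _) x
  rw [eval_christoffelDarbouxKernel_self, hp.integral_sq_christoffelDarbouxKernel] at hatom
  rcases christoffelDarbouxDiag_nonneg.eq_or_lt with hzero | hpos
  · rw [← hzero, zero_mul]
    exact zero_le_one
  · nlinarith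

theorem ofReal_christoffelDarbouxDiag_le_inv_measure_singleton [IsFiniteMeasure μ]
    (hp : OrthonormalPolynomials μ p) (n : ℕ) (x : ℝ) :
    ENNReal.ofReal (christoffelDarbouxDiag p n x) ≤ (μ {x})⁻¹ := by
  rw [ENNReal.le_inv_iff_mul_le, ← ofReal_measureReal,
    ← ENNReal.ofReal_mul christoffelDarbouxDiag_nonneg]
  exact ENNReal.ofReal_le_one.2 (hp.christoffelDarbouxDiag_mul_measureReal_le_one n x)

theorem inv_measure_singleton_le_iSup_christoffelDarbouxDiag [IsFiniteMeasure μ]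
    (hp : OrthonormalPolynomials μ p) (hdeg : ∀ j, (p j).natDegree = j) {x₀ A : ℝ}
    (hA : ∀ᵐ t ∂μ, |t - x₀| < A) :
    (μ {x₀})⁻¹ ≤ ⨆ n, ENNReal.ofReal (christoffelDarbouxDiag p n x₀) := by
  let h : ℝ[X] := 1 - C (A ^ 2)⁻¹ * (X - C x₀) ^ 2
  have heval (t : ℝ) : h.eval t = 1 - (t - x₀) ^ 2 / A ^ 2 := by
    simp [h, div_eq_inv_mul]
  have hlt : ∀ᵐ t ∂μ, t ≠ x₀ → |h.eval t ^ 2| < 1 := hA.mono fun t ht htx => by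
    rw [heval]
    exact abs_sq_one_sub_sq_div_sq_lt_one ht htx
  have hlim : Tendsto (fun k : ℕ => ∫ t, (h.eval t ^ 2) ^ k ∂μ) atTop (𝓝 (μ.real {x₀})) :=
    tendsto_integral_pow_measureReal_singleton (h.continuous.pow 2).aestronglyMeasurable
      (by simp [heval]) hlt
  have hdeg_pow (k : ℕ) : (h ^ k).natDegree ≤ 2 * k := by
    refine (natDegree_pow_le_of_le k ?_).trans_eq (mul_comm k 2)
    simp only [h]
    compute_degree
  have htrial (k : ℕ) :
      1 ≤ (∫ t, (h.eval t ^ 2) ^ k ∂μ) * christoffelDarbouxDiag p (2 * k) x₀ := by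
    simpa [heval, ← pow_mul, mul_comm 2 k] using
      hp.eval_sq_le_integral_sq_mul_christoffelDarbouxDiag hdeg (hdeg_pow k) x₀
  have hlim_inv := ((ENNReal.continuous_ofReal.tendsto _).comp hlim).inv
  rw [Function.comp_def, ofReal_measureReal] at hlim_inv
  refine le_of_tendsto' hlim_inv fun k => ?_
  calc (ENNReal.ofReal (∫ t, (h.eval t ^ 2) ^ k ∂μ))⁻¹
      ≤ ENNReal.ofReal (christoffelDarbouxDiag p (2 * k) x₀) := by
        rw [ENNReal.inv_le_iff_le_mul (by simp) (by simp), ← ENNReal.ofReal_mul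
          (integral_nonneg fun t => pow_nonneg (sq_nonneg _) k)]
        exact ENNReal.one_le_ofReal.2 (htrial k)
    _ ≤ ⨆ n, ENNReal.ofReal (christoffelDarbouxDiag p n x₀) := le_iSup_of_le (2 * k) le_rfl

end OrthonormalPolynomials

theorem cd_diagonal_tendsto_inv_point_mass_general
    (μ : Measure ℝ) [IsFiniteMeasure μ]
    (hsupp : ∃ R : ℝ, ∀ᵐ t ∂μ, |t| ≤ R)
    (p : ℕ → Polynomial ℝ)
    (hdeg : ∀ j, (p j).natDegree = j)
    (hortho : ∀ j k, ∫ t, (p j).eval t * (p k).eval t ∂μ = if j = k then 1 else 0)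
    (x₀ : ℝ) :
    Tendsto (fun n : ℕ =>
        ENNReal.ofReal (∑ j ∈ Finset.range (n + 1), ((p j).eval x₀) ^ 2))
      atTop (𝓝 ((μ {x₀})⁻¹)) := by
  have hp : OrthonormalPolynomials μ p := hortho
  obtain ⟨R, hR⟩ := hsupp
  have hA : ∀ᵐ t ∂μ, |t - x₀| < R + |x₀| + 1 :=
    hR.mono fun t ht => by linarith [abs_sub t x₀]
  have hmono : Monotone fun n => ENNReal.ofReal (christoffelDarbouxDiag p n x₀) :=
    fun _ _ hmn => ENNReal.ofReal_le_ofReal (monotone_christoffelDarbouxDiag hmn)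
  have hsup : ⨆ n, ENNReal.ofReal (christoffelDarbouxDiag p n x₀) = (μ {x₀})⁻¹ :=
    le_antisymm (iSup_le fun n => hp.ofReal_christoffelDarbouxDiag_le_inv_measure_singleton n x₀)
      (hp.inv_measure_singleton_le_iSup_christoffelDarbouxDiag hdeg hA)
  rw [← hsup]
  exact tendsto_atTop_iSup hmono

/-- For a compactly supported measure on `ℝ`,
`lim_{n→∞} K_n(x₀,x₀) = μ({x₀})⁻¹` (with the inverse taken in `ℝ≥0∞`,
so the limit is `∞` when `μ({x₀}) = 0`). -/
theorem cd_diagonal_tendsto_inv_point_mass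
    (μ : Measure ℝ) [IsFiniteMeasure μ]
    (hsupp : ∃ R : ℝ, ∀ᵐ t ∂μ, |t| ≤ R)
    (hmom : ∀ k : ℕ, Integrable (fun t => |t| ^ k) μ)
    (p : ℕ → Polynomial ℝ)
    (hdeg : ∀ j, (p j).natDegree = j)
    (hortho : ∀ j k, ∫ t, (p j).eval t * (p k).eval t ∂μ = if j = k then 1 else 0)
    (x₀ : ℝ) :
    Tendsto (fun n : ℕ =>
        ENNReal.ofReal (∑ j ∈ Finset.range (n + 1), ((p j).eval x₀) ^ 2))
      atTop (𝓝 ((μ {x₀})⁻¹)) :=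
  cd_diagonal_tendsto_inv_point_mass_general μ hsupp p hdeg hortho x₀
end

section
/- (Lubinsky's inequality) Let μ ≤ μ* be nontrivial measures on ℝ with finite moments, with CD kernels K_n and K_n*. Then for all z, ζ: |K_n(z,ζ) − K_n*(z,ζ)|² ≤ K_n(z,z) · (K_n(ζ,ζ) − K_n*(ζ,ζ)). -/
open MeasureTheory Polynomial ComplexConjugate

/-!
The polynomial `K_n(z, ·)` is the reproducing kernel of the polynomials of degree `≤ n` in
`L²(μ)`: `⟪K_n(z, ·), P⟫ = P(z)`. As `K_n*(ζ, ·)` has degree `≤ n`, the number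
`K_n(z, ζ) − K_n*(z, ζ)` is, up to conjugation, the inner product in `L²(μ)` of `K_n(z, ·)` with
`D = K_n(ζ, ·) − K_n*(ζ, ·)`, so by Cauchy–Schwarz its square is at most `K_n(z, z) ‖D‖²`.
Expanding, `‖D‖² = K_n(ζ, ζ) − 2 K_n*(ζ, ζ) + ‖K_n*(ζ, ·)‖²`, and `μ ≤ μ*` bounds the last
`L²(μ)`-norm by the `L²(μ*)`-norm, which is `K_n*(ζ, ζ)`.
-/

section FiniteMoments

variable {μ : Measure ℝ}

theorem memLp_two_eval_ofReal (hμ : ∀ k : ℕ, Integrable (fun t => |t| ^ k) μ) (P : ℂ[X]) :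
    MemLp (fun t : ℝ => P.eval (t : ℂ)) 2 μ := by
  have hmonomial (k : ℕ) : MemLp (fun t : ℝ => (t : ℂ) ^ k) 2 μ := by
    refine (memLp_two_iff_integrable_sq_norm (by fun_prop)).2 ((hμ (2 * k)).congr ?_)
    exact ae_of_all _ fun t => by simp [norm_pow, pow_mul']
  simp_rw [eval_eq_sum_range]
  exact memLp_finsetSum _ fun k _ => (hmonomial k).const_mul _

noncomputable def polyL2 (μ : Measure ℝ) (hμ : ∀ k : ℕ, Integrable (fun t => |t| ^ k) μ) :
    ℂ[X] →ₗ[ℂ] Lp ℂ 2 μ where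
  toFun P := (memLp_two_eval_ofReal hμ P).toLp
  map_add' P Q := by
    simp_rw [eval_add]
    exact MemLp.toLp_add _ _
  map_smul' c P := by
    simp_rw [eval_smul]
    exact MemLp.toLp_const_smul c _

variable (hμ : ∀ k : ℕ, Integrable (fun t => |t| ^ k) μ)

theorem inner_polyL2 (P Q : ℂ[X]) :
    inner ℂ (polyL2 μ hμ P) (polyL2 μ hμ Q) = ∫ t, conj (P.eval (t : ℂ)) * Q.eval (t : ℂ) ∂μ := by
  rw [L2.inner_def]
  refine integral_congr_ae ?_
  filter_upwards [(memLp_two_eval_ofReal hμ P).coeFn_toLp, (memLp_two_eval_ofReal hμ Q).coeFn_toLp]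
    with t hP hQ
  simp [polyL2, hP, hQ, mul_comm]

theorem inner_polyL2_map (p q : ℝ[X]) :
    inner ℂ (polyL2 μ hμ (p.map (algebraMap ℝ ℂ))) (polyL2 μ hμ (q.map (algebraMap ℝ ℂ)))
      = ((∫ t, p.eval t * q.eval t ∂μ : ℝ) : ℂ) := by
  rw [inner_polyL2, ← integral_complex_ofReal]
  refine integral_congr_ae (ae_of_all _ fun t => ?_)
  have haeval (r : ℝ[X]) : aeval (t : ℂ) r = ((r.eval t : ℝ) : ℂ) := (ofReal_eval r t).symm
  simp [haeval]

theorem norm_polyL2_le_of_le {ν : Measure ℝ} (hν : ∀ k : ℕ, Integrable (fun t => |t| ^ k) ν)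
    (hle : μ ≤ ν) (P : ℂ[X]) : ‖polyL2 μ hμ P‖ ≤ ‖polyL2 ν hν P‖ := by
  simp only [polyL2, LinearMap.coe_mk, AddHom.coe_mk, Lp.norm_toLp]
  exact ENNReal.toReal_mono (memLp_two_eval_ofReal hν P).eLpNorm_ne_top
    (eLpNorm_mono_measure _ hle)

theorem orthonormal_polyL2_map {p : ℕ → ℝ[X]}
    (hp : ∀ j k, ∫ t, (p j).eval t * (p k).eval t ∂μ = if j = k then 1 else 0) :
    Orthonormal ℂ fun j => polyL2 μ hμ ((p j).map (algebraMap ℝ ℂ)) :=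
  orthonormal_iff_ite.2 fun j k => by
    rw [inner_polyL2_map, hp]
    split_ifs <;> simp

end FiniteMoments

section ChristoffelDarboux

/-- The polynomial `ζ ↦ K_n(z, ζ)`. -/
noncomputable def cdKernel (p : ℕ → ℝ[X]) (n : ℕ) (z : ℂ) : ℂ[X] :=
  ∑ j ∈ Finset.range (n + 1), conj (aeval z (p j)) • (p j).map (algebraMap ℝ ℂ)

variable {p : ℕ → ℝ[X]} {n : ℕ}

theorem eval_cdKernel (z ζ : ℂ) :
    (cdKernel p n z).eval ζ = ∑ j ∈ Finset.range (n + 1), conj (aeval z (p j)) * aeval ζ (p j) := by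
  simp [cdKernel, eval_finsetSum, eval_map_algebraMap]

theorem eval_cdKernel_self (z : ℂ) :
    (cdKernel p n z).eval z = ((∑ j ∈ Finset.range (n + 1), ‖aeval z (p j)‖ ^ 2 : ℝ) : ℂ) := by
  simp [eval_cdKernel, RCLike.conj_mul]

theorem cdKernel_mem_degreeLE (hdeg : ∀ j, (p j).natDegree ≤ j) (z : ℂ) :
    cdKernel p n z ∈ degreeLE ℂ n := by
  refine Submodule.sum_mem _ fun j hj => Submodule.smul_mem _ _ ?_
  rw [mem_degreeLE, degree_map]
  exact degree_le_natDegree.trans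
    (WithBot.coe_le_coe.2 ((hdeg j).trans (Nat.lt_succ_iff.1 (Finset.mem_range.1 hj))))

variable {μ : Measure ℝ} (hμ : ∀ k : ℕ, Integrable (fun t => |t| ^ k) μ)

theorem inner_polyL2_cdKernel (hdeg : ∀ j, (p j).natDegree = j)
    (hp : ∀ j k, ∫ t, (p j).eval t * (p k).eval t ∂μ = if j = k then 1 else 0)
    (z : ℂ) {P : ℂ[X]} (hP : P ∈ degreeLE ℂ n) :
    inner ℂ (polyL2 μ hμ (cdKernel p n z)) (polyL2 μ hμ P) = P.eval z := by
  have hne (j : ℕ) : p j ≠ 0 := fun h => by simpa [h] using hp j j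
  let S : Sequence ℂ := ⟨fun j => (p j).map (algebraMap ℝ ℂ), fun j => by
    rw [degree_map, degree_eq_natDegree (hne j), hdeg]⟩
  rw [← S.span_degreeLE fun i _ => isUnit_iff_ne_zero.2 (leadingCoeff_ne_zero.2 (S.ne_zero i))]
    at hP
  refine LinearMap.eqOn_span (f := (innerSL ℂ (polyL2 μ hμ (cdKernel p n z))).toLinearMap ∘ₗ
    polyL2 μ hμ) (g := leval z) ?_ hP
  rintro _ ⟨j, hj, rfl⟩
  change inner ℂ (polyL2 μ hμ (cdKernel p n z)) (polyL2 μ hμ ((p j).map (algebraMap ℝ ℂ)))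
    = ((p j).map (algebraMap ℝ ℂ)).eval z
  simp only [cdKernel, map_sum, map_smul]
  rw [(orthonormal_polyL2_map hμ hp).inner_left_sum _
    (Finset.mem_range.2 (Nat.lt_succ_of_le hj)), eval_map_algebraMap, RCLike.conj_conj]

theorem norm_polyL2_cdKernel_sq (hdeg : ∀ j, (p j).natDegree = j)
    (hp : ∀ j k, ∫ t, (p j).eval t * (p k).eval t ∂μ = if j = k then 1 else 0) (z : ℂ) :
    ‖polyL2 μ hμ (cdKernel p n z)‖ ^ 2 = ∑ j ∈ Finset.range (n + 1), ‖aeval z (p j)‖ ^ 2 := by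
  rw [← inner_self_eq_norm_sq (𝕜 := ℂ),
    inner_polyL2_cdKernel hμ hdeg hp z (cdKernel_mem_degreeLE (fun j => (hdeg j).le) z),
    eval_cdKernel_self]
  exact Complex.ofReal_re _

theorem norm_polyL2_cdKernel_sub_sq_le {ν : Measure ℝ} {q : ℕ → ℝ[X]}
    (hν : ∀ k : ℕ, Integrable (fun t => |t| ^ k) ν) (hle : μ ≤ ν)
    (hpdeg : ∀ j, (p j).natDegree = j) (hqdeg : ∀ j, (q j).natDegree = j)
    (hp : ∀ j k, ∫ t, (p j).eval t * (p k).eval t ∂μ = if j = k then 1 else 0)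
    (hq : ∀ j k, ∫ t, (q j).eval t * (q k).eval t ∂ν = if j = k then 1 else 0) (ζ : ℂ) :
    ‖polyL2 μ hμ (cdKernel p n ζ - cdKernel q n ζ)‖ ^ 2
      ≤ (∑ j ∈ Finset.range (n + 1), ‖aeval ζ (p j)‖ ^ 2)
        - ∑ j ∈ Finset.range (n + 1), ‖aeval ζ (q j)‖ ^ 2 := by
  have hcross : RCLike.re (inner ℂ (polyL2 μ hμ (cdKernel p n ζ)) (polyL2 μ hμ (cdKernel q n ζ)))
      = ∑ j ∈ Finset.range (n + 1), ‖aeval ζ (q j)‖ ^ 2 := by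
    rw [inner_polyL2_cdKernel hμ hpdeg hp ζ (cdKernel_mem_degreeLE (fun j => (hqdeg j).le) ζ),
      eval_cdKernel_self]
    exact Complex.ofReal_re _
  have hle_star : ‖polyL2 μ hμ (cdKernel q n ζ)‖ ^ 2
      ≤ ∑ j ∈ Finset.range (n + 1), ‖aeval ζ (q j)‖ ^ 2 := by
    rw [← norm_polyL2_cdKernel_sq hν hqdeg hq ζ]
    exact pow_le_pow_left₀ (norm_nonneg _) (norm_polyL2_le_of_le hμ hν hle _) 2
  rw [map_sub, norm_sub_sq (𝕜 := ℂ), hcross, norm_polyL2_cdKernel_sq hμ hpdeg hp]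
  linarith

end ChristoffelDarboux

/-- Lubinsky's inequality: if `μ ≤ μ*`, then
`|K_n(z,ζ) − K_n*(z,ζ)|² ≤ K_n(z,z) (K_n(ζ,ζ) − K_n*(ζ,ζ))`. -/
theorem lubinsky_inequality
    (μ μstar : Measure ℝ) (hle : μ ≤ μstar)
    (hmom : ∀ k : ℕ, Integrable (fun t => |t| ^ k) μstar)
    (p q : ℕ → Polynomial ℝ)
    (hpdeg : ∀ j, (p j).natDegree = j)
    (hqdeg : ∀ j, (q j).natDegree = j)
    (hportho : ∀ j k, ∫ t, (p j).eval t * (p k).eval t ∂μ = if j = k then 1 else 0)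
    (hqortho : ∀ j k, ∫ t, (q j).eval t * (q k).eval t ∂μstar = if j = k then 1 else 0)
    (n : ℕ) :
    ∀ z ζ : ℂ,
      ‖∑ j ∈ Finset.range (n + 1),
          ((starRingEnd ℂ) (Polynomial.aeval z (p j)) * Polynomial.aeval ζ (p j)
            - (starRingEnd ℂ) (Polynomial.aeval z (q j)) * Polynomial.aeval ζ (q j))‖ ^ 2
      ≤ (∑ j ∈ Finset.range (n + 1), ‖Polynomial.aeval z (p j)‖ ^ 2)
        * ((∑ j ∈ Finset.range (n + 1), ‖Polynomial.aeval ζ (p j)‖ ^ 2)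
            - ∑ j ∈ Finset.range (n + 1), ‖Polynomial.aeval ζ (q j)‖ ^ 2) := by
  intro z ζ
  have hmomμ (k : ℕ) : Integrable (fun t => |t| ^ k) μ := (hmom k).mono_measure hle
  set ι := polyL2 μ hmomμ
  have hdiff : ‖∑ j ∈ Finset.range (n + 1),
      (conj (aeval z (p j)) * aeval ζ (p j) - conj (aeval z (q j)) * aeval ζ (q j))‖
      = ‖inner ℂ (ι (cdKernel p n z)) (ι (cdKernel p n ζ - cdKernel q n ζ))‖ := by
    rw [inner_polyL2_cdKernel hmomμ hpdeg hportho z (Submodule.sub_mem _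
        (cdKernel_mem_degreeLE (fun j => (hpdeg j).le) ζ)
        (cdKernel_mem_degreeLE (fun j => (hqdeg j).le) ζ)),
      eval_sub, eval_cdKernel, eval_cdKernel, ← Finset.sum_sub_distrib, ← RCLike.norm_conj, map_sum]
    simp [mul_comm]
  calc _ = ‖inner ℂ (ι (cdKernel p n z)) (ι (cdKernel p n ζ - cdKernel q n ζ))‖ ^ 2 := by
        rw [hdiff]
    _ ≤ (‖ι (cdKernel p n z)‖ * ‖ι (cdKernel p n ζ - cdKernel q n ζ)‖) ^ 2 :=
        pow_le_pow_left₀ (norm_nonneg _) (norm_inner_le_norm (𝕜 := ℂ) _ _) 2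
    _ ≤ _ := by
        rw [mul_pow, norm_polyL2_cdKernel_sq hmomμ hpdeg hportho]
        exact mul_le_mul_of_nonneg_left
          (norm_polyL2_cdKernel_sub_sq_le hmomμ hmom hle hpdeg hqdeg hportho hqortho ζ)
          (by positivity)
end
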